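/- arXiv:1004.1500 — 6 statements merged into one kernel-verified Lean document; each statement's English description precedes it below -/
import Mathlib

section
/- Let Z be a real n×n Z-matrix. Then Z is an M-matrix if and only if Z admits a representation Z = N − P, where N is a nonsingular M-matrix, P ≥ 0 entrywise, and ρ(N⁻¹P) ≤ 1. -/
open Matrix

/-- The spectral radius of a real square matrix: the supremum of the norms of
its complex eigenvalues. -/
noncomputable def specRad {n : ℕ} (A : Matrix (Fin n) (Fin n) ℝ) : ℝ :=
  sSup {r : ℝ | ∃ μ ∈ spectrum ℂ (A.map (Complex.ofReal)), ‖μ‖ = r}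

/-- A real square matrix is a Z-matrix if its off-diagonal entries are nonpositive. -/
def IsZMat {n : ℕ} (A : Matrix (Fin n) (Fin n) ℝ) : Prop :=
  ∀ i j, i ≠ j → A i j ≤ 0

/-- An M-matrix: a matrix of the form `s • 1 - P` with `P ≥ 0` and `ρ(P) ≤ s`. -/
def IsMMat {n : ℕ} (A : Matrix (Fin n) (Fin n) ℝ) : Prop :=
  ∃ (s : ℝ) (P : Matrix (Fin n) (Fin n) ℝ),
    (∀ i j, 0 ≤ P i j) ∧ specRad P ≤ s ∧ A = s • (1 : Matrix (Fin n) (Fin n) ℝ) - P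

/-- A nonsingular M-matrix: an M-matrix that is invertible. -/
def IsNsMMat {n : ℕ} (A : Matrix (Fin n) (Fin n) ℝ) : Prop :=
  IsMMat A ∧ IsUnit A.det

/-!
For a nonnegative matrix `A` and `ρ(A) < s`, Gelfand's formula makes the Neumann series
`(s • 1 - A)⁻¹ = ∑ s⁻ᵏ⁻¹ Aᵏ` converge, so this inverse is entrywise nonnegative; by continuity of
the inverse this persists up to `ρ(A) ≤ s` whenever `s • 1 - A` is invertible. Consequently a
nonnegative `w ≠ 0` with `c • w ≤ A w` forces `c ≤ ρ(A)`, since otherwise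
`w = (c • 1 - A)⁻¹ (c • w - A w) ≤ 0`. Such a `w` exists for `c = ρ(A)`: the moduli `|v|` of an
eigenvector for an eigenvalue of modulus `ρ(A)` satisfy `ρ(A) • |v| ≤ A |v|`.

If `Z = s • 1 - Q` is an M-matrix, take `N = (s + 1) • 1` and `P = Q + 1`, so that
`ρ(N⁻¹ P) ≤ (ρ(Q) + 1) / (s + 1) ≤ 1`. Conversely, if `N = t • 1 - Q`, then `Z = t • 1 - (Q + P)`,
and `r = ρ(Q + P) > t` is impossible: for `w ≥ 0` with `r • w ≤ (Q + P) w` and `u = N⁻¹ w` one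
gets `w ≤ t • u` and `N⁻¹ P w ≥ (r - t) • u + w ≥ (r / t) • w`, whence `ρ(N⁻¹ P) ≥ r / t > 1`.
-/

open Filter Topology
open scoped NNReal ENNReal

theorem summable_pow_of_spectralRadius_lt_one {A : Type*} [NormedRing A] [NormedAlgebra ℂ A]
    [CompleteSpace A] {a : A} (h : spectralRadius ℂ a < 1) : Summable (a ^ ·) := by
  obtain ⟨c, hac, hc1⟩ := ENNReal.lt_iff_exists_nnreal_btwn.mp h
  refine .of_norm_bounded_eventually_nat
    (summable_geometric_of_lt_one c.coe_nonneg (mod_cast hc1)) ?_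
  have hroot := spectrum.pow_nnnorm_pow_one_div_tendsto_nhds_spectralRadius a
  filter_upwards [hroot.eventually_lt_const hac, eventually_gt_atTop 0] with k hk hk0
  rw [one_div, ENNReal.rpow_inv_lt_iff (by positivity), ENNReal.rpow_natCast] at hk
  exact_mod_cast hk.le

namespace Matrix

variable {m n α : Type*} [Fintype n] [Semiring α] [PartialOrder α] [IsOrderedRing α]
  {B : Matrix m n α}

theorem mulVec_le_mulVec (hB : ∀ i j, 0 ≤ B i j) {v w : n → α} (h : v ≤ w) :
    B *ᵥ v ≤ B *ᵥ w :=
  fun i => Finset.sum_le_sum fun j _ => mul_le_mul_of_nonneg_left (h j) (hB i j)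

theorem mulVec_nonneg (hB : ∀ i j, 0 ≤ B i j) {v : n → α} (hv : 0 ≤ v) : 0 ≤ B *ᵥ v := by
  simpa using mulVec_le_mulVec hB hv

end Matrix

theorem Matrix.exists_mulVec_eq_smul_of_mem_spectrum {n K : Type*} [Fintype n] [DecidableEq n]
    [Field K] {B : Matrix n n K} {μ : K} (hμ : μ ∈ spectrum K B) :
    ∃ v ≠ 0, B *ᵥ v = μ • v := by
  rw [← Matrix.spectrum_toLin', ← Module.End.hasEigenvalue_iff_mem_spectrum] at hμ
  obtain ⟨v, hv, hv0⟩ := hμ.exists_hasEigenvector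
  exact ⟨v, hv0, by simpa using Module.End.mem_eigenspace_iff.mp hv⟩

variable {n : ℕ}

theorem norm_le_specRad {A : Matrix (Fin n) (Fin n) ℝ} {μ : ℂ}
    (hμ : μ ∈ spectrum ℂ (A.map Complex.ofReal)) : ‖μ‖ ≤ specRad A :=
  le_csSup ((Matrix.finite_spectrum _).image norm).bddAbove ⟨μ, hμ, rfl⟩

theorem specRad_le_of_forall_norm_le {A : Matrix (Fin n) (Fin n) ℝ} {c : ℝ} (hc : 0 ≤ c)
    (h : ∀ μ ∈ spectrum ℂ (A.map Complex.ofReal), ‖μ‖ ≤ c) : specRad A ≤ c :=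
  Real.sSup_le (by rintro _ ⟨μ, hμ, rfl⟩; exact h μ hμ) hc

theorem specRad_nonneg (A : Matrix (Fin n) (Fin n) ℝ) : 0 ≤ specRad A :=
  Real.sSup_nonneg (by rintro _ ⟨μ, -, rfl⟩; exact norm_nonneg μ)

theorem exists_norm_eq_specRad {A : Matrix (Fin n) (Fin n) ℝ} (h : 0 < specRad A) :
    ∃ μ ∈ spectrum ℂ (A.map Complex.ofReal), ‖μ‖ = specRad A := by
  have hne : {r : ℝ | ∃ μ ∈ spectrum ℂ (A.map Complex.ofReal), ‖μ‖ = r}.Nonempty :=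
    Set.nonempty_iff_ne_empty.mpr fun he => h.ne' (by rw [specRad, he, Real.sSup_empty])
  exact hne.csSup_mem ((Matrix.finite_spectrum _).image norm)

theorem spectralRadius_le_specRad (A : Matrix (Fin n) (Fin n) ℝ) :
    spectralRadius ℂ (A.map Complex.ofReal) ≤ ENNReal.ofReal (specRad A) :=
  iSup₂_le fun μ hμ => by
    rw [← enorm_eq_nnnorm, ← ofReal_norm]
    exact ENNReal.ofReal_le_ofReal (norm_le_specRad hμ)

theorem specRad_zero : specRad (0 : Matrix (Fin n) (Fin n) ℝ) = 0 := by
  refine le_antisymm (specRad_le_of_forall_norm_le le_rfl fun μ hμ => ?_) (specRad_nonneg 0)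
  have : (‖μ‖₊ : ℝ≥0∞) ≤ spectralRadius ℂ (0 : Matrix (Fin n) (Fin n) ℂ) :=
    le_iSup₂ (f := fun μ _ => (‖μ‖₊ : ℝ≥0∞)) μ (by simpa using hμ)
  simpa using this

theorem specRad_smul_le (A : Matrix (Fin n) (Fin n) ℝ) {c : ℝ} (hc : 0 < c) :
    specRad (c • A) ≤ c * specRad A := by
  refine specRad_le_of_forall_norm_le (by positivity [specRad_nonneg A]) fun μ hμ => ?_
  have hmap : (c • A).map Complex.ofReal =
      Units.mk0 (c : ℂ) (by exact_mod_cast hc.ne') • A.map Complex.ofReal := by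
    ext i j; simp
  rw [hmap, spectrum.unit_smul_eq_smul] at hμ
  obtain ⟨ν, hν, rfl⟩ := Set.mem_smul_set.mp hμ
  rw [Units.smul_def, Units.val_mk0, smul_eq_mul, norm_mul, Complex.norm_real,
    Real.norm_of_nonneg hc.le]
  exact mul_le_mul_of_nonneg_left (norm_le_specRad hν) hc.le

theorem specRad_add_smul_one_le (A : Matrix (Fin n) (Fin n) ℝ) (c : ℝ) :
    specRad (A + c • 1) ≤ specRad A + |c| := by
  refine specRad_le_of_forall_norm_le (by positivity [specRad_nonneg A]) fun μ hμ => ?_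
  have hmap : (A + c • 1).map Complex.ofReal =
      A.map Complex.ofReal + algebraMap ℂ _ (c : ℂ) := by
    ext i j; by_cases h : i = j <;> simp [Matrix.algebraMap_matrix_apply, h]
  rw [hmap, ← spectrum.add_singleton_eq] at hμ
  obtain ⟨ν, hν, _, rfl, rfl⟩ := Set.mem_add.mp hμ
  calc ‖ν + c‖ ≤ ‖ν‖ + ‖(c : ℂ)‖ := norm_add_le _ _
    _ ≤ specRad A + |c| := by
        rw [Complex.norm_real, Real.norm_eq_abs]
        gcongr
        exact norm_le_specRad hν

section

attribute [local instance] Matrix.linftyOpNormedRing Matrix.linftyOpNormedAlgebra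

theorem summable_pow_of_specRad_lt_one {A : Matrix (Fin n) (Fin n) ℝ} (h : specRad A < 1) :
    Summable (A ^ ·) := by
  have hC := summable_pow_of_spectralRadius_lt_one
    ((spectralRadius_le_specRad A).trans_lt (by simpa using h))
  refine (hC.map Complex.reAddGroupHom.mapMatrix
    (continuous_id.matrix_map Complex.continuous_re)).congr fun k => ?_
  change ((A.map Complex.ofRealHom) ^ k).map Complex.re = A ^ k
  rw [← Matrix.map_pow]
  ext i j
  simp

end

variable {A : Matrix (Fin n) (Fin n) ℝ} {s : ℝ}

theorem summable_pow_inv_smul (h : specRad A < s) : Summable ((s⁻¹ • A) ^ ·) := by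
  have hs : 0 < s := (specRad_nonneg A).trans_lt h
  refine summable_pow_of_specRad_lt_one ?_
  calc specRad (s⁻¹ • A) ≤ s⁻¹ * specRad A := specRad_smul_le A (inv_pos.mpr hs)
    _ < 1 := by rwa [inv_mul_lt_one₀ hs]

theorem smul_one_sub_mul_tsum_eq_one (h : specRad A < s) :
    (s • (1 : Matrix (Fin n) (Fin n) ℝ) - A) * (s⁻¹ • ∑' k, (s⁻¹ • A) ^ k) = 1 := by
  have hs : s ≠ 0 := ((specRad_nonneg A).trans_lt h).ne'
  rw [show s • (1 : Matrix (Fin n) (Fin n) ℝ) - A = s • (1 - s⁻¹ • A) by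
      rw [smul_sub, smul_smul, mul_inv_cancel₀ hs, one_smul],
    smul_mul_smul_comm, mul_inv_cancel₀ hs, one_smul,
    (summable_pow_inv_smul h).one_sub_mul_tsum_pow]

theorem isUnit_det_smul_one_sub (h : specRad A < s) :
    IsUnit (s • (1 : Matrix (Fin n) (Fin n) ℝ) - A).det :=
  isUnit_det_of_right_inverse (smul_one_sub_mul_tsum_eq_one h)

theorem inv_smul_one_sub_nonneg (hA : ∀ i j, 0 ≤ A i j) (h : specRad A < s) (i j : Fin n) :
    0 ≤ (s • (1 : Matrix (Fin n) (Fin n) ℝ) - A)⁻¹ i j := by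
  have hs : 0 ≤ s⁻¹ := inv_nonneg.mpr ((specRad_nonneg A).trans_lt h).le
  rw [inv_eq_right_inv (smul_one_sub_mul_tsum_eq_one h), Matrix.smul_apply, smul_eq_mul]
  refine mul_nonneg hs (HasSum.nonneg (fun k => ?_) ((summable_pow_inv_smul h).hasSum.map
    (entryAddMonoidHom ℝ i j) (continuous_id.matrix_elem i j)))
  exact pow_apply_nonneg (fun i j => mul_nonneg hs (hA i j)) k i j

theorem inv_smul_one_sub_nonneg_of_specRad_le (hA : ∀ i j, 0 ≤ A i j) (h : specRad A ≤ s)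
    (hdet : IsUnit (s • (1 : Matrix (Fin n) (Fin n) ℝ) - A).det) (i j : Fin n) :
    0 ≤ (s • (1 : Matrix (Fin n) (Fin n) ℝ) - A)⁻¹ i j := by
  have hcont : ContinuousAt (fun t : ℝ => (t • (1 : Matrix (Fin n) (Fin n) ℝ) - A)⁻¹) s :=
    (continuousAt_matrix_inv _ (by
      rw [Ring.inverse_eq_inv']
      exact continuousAt_inv₀ hdet.ne_zero)).comp (by fun_prop)
  have htend : Tendsto (fun t : ℝ => (t • (1 : Matrix (Fin n) (Fin n) ℝ) - A)⁻¹ i j) (𝓝[>] s)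
      (𝓝 ((s • (1 : Matrix (Fin n) (Fin n) ℝ) - A)⁻¹ i j)) :=
    ((continuous_id.matrix_elem i j).tendsto _).comp (hcont.tendsto.mono_left nhdsWithin_le_nhds)
  exact ge_of_tendsto htend (eventually_nhdsWithin_of_forall fun t (ht : s < t) =>
    inv_smul_one_sub_nonneg hA (h.trans_lt ht) i j)

theorem le_specRad_of_smul_le_mulVec (hA : ∀ i j, 0 ≤ A i j) {w : Fin n → ℝ} (hw0 : 0 ≤ w)
    (hw : w ≠ 0) {c : ℝ} (h : c • w ≤ A *ᵥ w) : c ≤ specRad A := by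
  by_contra! hc
  refine hw (le_antisymm ?_ hw0)
  calc w = (c • 1 - A)⁻¹ *ᵥ ((c • 1 - A) *ᵥ w) := by
        rw [mulVec_mulVec, nonsing_inv_mul _ (isUnit_det_smul_one_sub hc), one_mulVec]
    _ ≤ (c • 1 - A)⁻¹ *ᵥ 0 := by
        refine mulVec_le_mulVec (inv_smul_one_sub_nonneg hA hc) ?_
        rw [sub_mulVec, smul_mulVec, one_mulVec]
        exact sub_nonpos.mpr h
    _ = 0 := mulVec_zero _

theorem exists_nonneg_smul_specRad_le_mulVec (hA : ∀ i j, 0 ≤ A i j) (h : 0 < specRad A) :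
    ∃ w : Fin n → ℝ, 0 ≤ w ∧ w ≠ 0 ∧ specRad A • w ≤ A *ᵥ w := by
  obtain ⟨μ, hμ, hμρ⟩ := exists_norm_eq_specRad h
  obtain ⟨v, hv, hAv⟩ := exists_mulVec_eq_smul_of_mem_spectrum hμ
  refine ⟨fun i => ‖v i‖, fun i => norm_nonneg _,
    fun h0 => hv (funext fun i => norm_eq_zero.mp (congrFun h0 i)), fun i => ?_⟩
  calc specRad A * ‖v i‖ = ‖(A.map Complex.ofReal *ᵥ v) i‖ := by
        rw [hAv, Pi.smul_apply, norm_smul, hμρ]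
    _ ≤ ∑ j, ‖(A i j : ℂ) * v j‖ := norm_sum_le (f := fun j => (A i j : ℂ) * v j) _
    _ = (A *ᵥ fun i => ‖v i‖) i := by
        simp [mulVec, dotProduct, Complex.norm_real, Real.norm_of_nonneg (hA i _)]

theorem smul_le_smul_inv_mul_mulVec {Q P : Matrix (Fin n) (Fin n) ℝ} {t r : ℝ}
    (hQ : ∀ i j, 0 ≤ Q i j) (hdet : IsUnit (t • (1 : Matrix (Fin n) (Fin n) ℝ) - Q).det)
    (hNinv : ∀ i j, 0 ≤ (t • (1 : Matrix (Fin n) (Fin n) ℝ) - Q)⁻¹ i j) (ht : 0 ≤ t) (htr : t ≤ r)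
    {w : Fin n → ℝ} (hw0 : 0 ≤ w) (hRw : r • w ≤ (Q + P) *ᵥ w) :
    r • w ≤ t • (((t • (1 : Matrix (Fin n) (Fin n) ℝ) - Q)⁻¹ * P) *ᵥ w) := by
  set N := t • (1 : Matrix (Fin n) (Fin n) ℝ) - Q with hN
  set u := N⁻¹ *ᵥ w
  have hwu : w ≤ t • u :=
    calc w = N *ᵥ u := by rw [mulVec_mulVec, mul_nonsing_inv _ hdet, one_mulVec]
      _ = t • u - Q *ᵥ u := by rw [hN, sub_mulVec, smul_mulVec, one_mulVec]
      _ ≤ t • u := sub_le_self _ (mulVec_nonneg hQ (mulVec_nonneg hNinv hw0))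
  have hPw : (r - t) • w + N *ᵥ w ≤ P *ᵥ w := fun i => by
    have := hRw i
    simp only [hN, add_mulVec, sub_mulVec, smul_mulVec, one_mulVec, Pi.add_apply, Pi.sub_apply,
      Pi.smul_apply, smul_eq_mul] at this ⊢
    linarith
  have hMw : (r - t) • u + w ≤ (N⁻¹ * P) *ᵥ w := by
    have := mulVec_le_mulVec hNinv hPw
    rwa [mulVec_add, mulVec_smul, mulVec_mulVec, nonsing_inv_mul _ hdet, one_mulVec,
      mulVec_mulVec] at this
  intro i
  have h1 := hwu i
  have h2 := hMw i
  simp only [Pi.smul_apply, Pi.add_apply, smul_eq_mul] at h1 h2 ⊢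
  nlinarith [mul_le_mul_of_nonneg_left h1 (sub_nonneg.mpr htr), mul_le_mul_of_nonneg_left h2 ht]

theorem specRad_add_le_of_splitting {Q P : Matrix (Fin n) (Fin n) ℝ} {t : ℝ}
    (hQ : ∀ i j, 0 ≤ Q i j) (hP : ∀ i j, 0 ≤ P i j) (hQt : specRad Q ≤ t)
    (hdet : IsUnit (t • (1 : Matrix (Fin n) (Fin n) ℝ) - Q).det)
    (hNP : specRad ((t • (1 : Matrix (Fin n) (Fin n) ℝ) - Q)⁻¹ * P) ≤ 1) :
    specRad (Q + P) ≤ t := by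
  have hNinv := inv_smul_one_sub_nonneg_of_specRad_le hQ hQt hdet
  have ht := (specRad_nonneg Q).trans hQt
  by_contra! htr
  have hr : 0 < specRad (Q + P) := ht.trans_lt htr
  obtain ⟨w, hw0, hw, hRw⟩ := exists_nonneg_smul_specRad_le_mulVec (A := Q + P)
    (fun i j => add_nonneg (hQ i j) (hP i j)) hr
  have hkey := smul_le_smul_inv_mul_mulVec hQ hdet hNinv ht htr.le hw0 hRw
  rcases ht.eq_or_lt with rfl | ht
  · rw [zero_smul] at hkey
    exact hw (le_antisymm ((smul_nonpos_iff_nonpos_of_pos_left hr).mp hkey) hw0)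
  have hM : ∀ i j, 0 ≤ ((t • 1 - Q)⁻¹ * P) i j := fun i j => by
    rw [mul_apply]
    exact Finset.sum_nonneg fun k _ => mul_nonneg (hNinv i k) (hP k j)
  have hrt := le_specRad_of_smul_le_mulVec hM hw0 hw (c := specRad (Q + P) / t) <| by
    simpa [div_eq_inv_mul, mul_smul, ht.ne'] using
      smul_le_smul_of_nonneg_left hkey (inv_nonneg.mpr ht.le)
  exact htr.not_ge ((div_le_one ht).mp (hrt.trans hNP))

theorem isNsMMat_smul_one {c : ℝ} (hc : 0 < c) :
    IsNsMMat (c • (1 : Matrix (Fin n) (Fin n) ℝ)) :=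
  ⟨⟨c, 0, fun _ _ => le_rfl, specRad_zero.trans_le hc.le, (sub_zero _).symm⟩, by simp [hc.ne']⟩

theorem specRad_inv_smul_one_mul_add_one_le {Q : Matrix (Fin n) (Fin n) ℝ} {s : ℝ}
    (hQs : specRad Q ≤ s) :
    specRad (((s + 1) • (1 : Matrix (Fin n) (Fin n) ℝ))⁻¹ * (Q + 1)) ≤ 1 := by
  have hc : 0 < s + 1 := by linarith [specRad_nonneg Q]
  have hinv : ((s + 1) • (1 : Matrix (Fin n) (Fin n) ℝ))⁻¹ = (s + 1)⁻¹ • 1 :=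
    inv_eq_right_inv (by rw [smul_mul_smul_comm, mul_inv_cancel₀ hc.ne', one_mul, one_smul])
  calc specRad (((s + 1) • 1)⁻¹ * (Q + 1)) = specRad ((s + 1)⁻¹ • (Q + 1)) := by
        rw [hinv, Matrix.smul_mul, Matrix.one_mul]
    _ ≤ (s + 1)⁻¹ * specRad (Q + 1) := specRad_smul_le _ (inv_pos.mpr hc)
    _ ≤ (s + 1)⁻¹ * (specRad Q + 1) := by
        gcongr
        simpa using specRad_add_smul_one_le Q 1
    _ ≤ 1 := by rw [inv_mul_le_one₀ hc]; linarith

theorem zmat_is_mmat_iff_splitting_general {n : ℕ} (Z : Matrix (Fin n) (Fin n) ℝ) :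
    IsMMat Z ↔
      ∃ N P : Matrix (Fin n) (Fin n) ℝ,
        IsNsMMat N ∧ (∀ i j, 0 ≤ P i j) ∧ Z = N - P ∧ specRad (N⁻¹ * P) ≤ 1 := by
  constructor
  · rintro ⟨s, Q, hQ, hQs, rfl⟩
    have hc : 0 < s + 1 := by linarith [specRad_nonneg Q]
    refine ⟨(s + 1) • 1, Q + 1, isNsMMat_smul_one hc, fun i j => ?_, by module,
      specRad_inv_smul_one_mul_add_one_le hQs⟩
    exact add_nonneg (hQ i j) (by by_cases h : i = j <;> simp [one_apply, h])
  · rintro ⟨_, P, ⟨⟨t, Q, hQ, hQt, rfl⟩, hdet⟩, hP, rfl, hNP⟩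
    exact ⟨t, Q + P, fun i j => add_nonneg (hQ i j) (hP i j),
      specRad_add_le_of_splitting hQ hP hQt hdet hNP, sub_sub _ _ _⟩

/-- A Z-matrix `Z` is an M-matrix iff it can be written as `Z = N - P` with `N` a
nonsingular M-matrix, `P ≥ 0` entrywise and `ρ(N⁻¹ P) ≤ 1`. -/
theorem zmat_is_mmat_iff_splitting {n : ℕ} (Z : Matrix (Fin n) (Fin n) ℝ)
    (hZ : IsZMat Z) :
    IsMMat Z ↔
      ∃ N P : Matrix (Fin n) (Fin n) ℝ,
        IsNsMMat N ∧ (∀ i j, 0 ≤ P i j) ∧ Z = N - P ∧ specRad (N⁻¹ * P) ≤ 1 :=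
  zmat_is_mmat_iff_splitting_general Z
end

section
/- Let l : ℝⁿ → ℝᵐ be a weakly positive linear map. Then for every z ∈ ℝᵐ with z ≥ 0, the set {x ∈ ℝⁿ : x ≥ 0 and l(x) ≤ z} is bounded. -/
/-!
Writing `x = ∑ⱼ xⱼ eⱼ`, a weakly positive `l` sends each basis vector `eⱼ` to a nonzero
nonnegative vector, so for `x ≥ 0` every term `xⱼ • l eⱼ` is dominated by `l x ≤ z`.
Summing coordinates gives `xⱼ ≤ (∑ᵢ zᵢ) / (∑ᵢ (l eⱼ)ᵢ)`, which puts the set in a box.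
-/

/-- A linear map `l : ℝⁿ → ℝᵐ` is weakly positive if `l x ≥ 0` and `l x ≠ 0`
whenever `x ≥ 0` and `x ≠ 0` (all inequalities entrywise). -/
def WeaklyPos {n m : ℕ} (l : (Fin n → ℝ) →ₗ[ℝ] (Fin m → ℝ)) : Prop :=
  ∀ x : Fin n → ℝ, 0 ≤ x → x ≠ 0 → 0 ≤ l x ∧ l x ≠ 0

theorem LinearMap.smul_apply_single_le {ι M : Type*} [Fintype ι] [DecidableEq ι]
    [AddCommGroup M] [PartialOrder M] [IsOrderedAddMonoid M] [Module ℝ M] [PosSMulMono ℝ M]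
    {f : (ι → ℝ) →ₗ[ℝ] M} (hf : ∀ k, 0 ≤ f (Pi.single k 1)) {x : ι → ℝ} (hx : 0 ≤ x)
    (j : ι) : x j • f (Pi.single j 1) ≤ f x := by
  conv_rhs => rw [pi_eq_sum_univ' x, map_sum]
  simp only [map_smul]
  exact Finset.single_le_sum (fun k _ => smul_nonneg (hx k) (hf k)) (Finset.mem_univ j)

namespace WeaklyPos

variable {n m : ℕ} {l : (Fin n → ℝ) →ₗ[ℝ] (Fin m → ℝ)}

theorem apply_single_pos (hl : WeaklyPos l) (j : Fin n) : 0 < l (Pi.single j 1) :=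
  let ⟨hnonneg, hne⟩ := hl _ (Pi.single_nonneg.2 zero_le_one) (by simp)
  hnonneg.lt_of_ne' hne

theorem mul_sum_apply_single_le (hl : WeaklyPos l) {x : Fin n → ℝ} (hx : 0 ≤ x) (j : Fin n) :
    x j * ∑ i, l (Pi.single j 1) i ≤ ∑ i, l x i := by
  have hdom := l.smul_apply_single_le (fun k => (hl.apply_single_pos k).le) hx j
  rw [Finset.mul_sum]
  exact Finset.sum_le_sum fun i _ => hdom i

end WeaklyPos

theorem weaklyPos_sublevel_bounded_general {n m : ℕ}
    (l : (Fin n → ℝ) →ₗ[ℝ] (Fin m → ℝ)) (hl : WeaklyPos l)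
    (z : Fin m → ℝ) :
    Bornology.IsBounded {x : Fin n → ℝ | 0 ≤ x ∧ l x ≤ z} := by
  refine (Metric.isBounded_Icc 0 fun j => (∑ i, z i) / ∑ i, l (Pi.single j 1) i).subset ?_
  rintro x ⟨hx, hlx⟩
  refine ⟨hx, fun j => (le_div_iff₀ (Fintype.sum_pos (hl.apply_single_pos j))).2 ?_⟩
  calc x j * ∑ i, l (Pi.single j 1) i ≤ ∑ i, l x i := hl.mul_sum_apply_single_le hx j
    _ ≤ ∑ i, z i := Finset.sum_le_sum fun i _ => hlx i

/-- If `l` is a weakly positive linear map, then for every `z ≥ 0` the set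
`{x : x ≥ 0 and l x ≤ z}` is bounded. -/
theorem weaklyPos_sublevel_bounded {n m : ℕ}
    (l : (Fin n → ℝ) →ₗ[ℝ] (Fin m → ℝ)) (hl : WeaklyPos l)
    (z : Fin m → ℝ) (hz : 0 ≤ z) :
    Bornology.IsBounded {x : Fin n → ℝ | 0 ≤ x ∧ l x ≤ z} :=
  weaklyPos_sublevel_bounded_general l hl z
end

section
/- If there exists a vector y ≥ 0 such that F(y) ≥ 0 (that is, My ≥ a + b(y,y)), then the QVE Mx = a + b(x,x) has a minimal nonnegative solution x*, and x* ≤ y. -/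
/-!
Shifting the diagonal, write `M = σ • 1 - Q` with `σ > 0` and `Q ≥ 0`. The solutions of the QVE
are then the fixed points of `g x = σ⁻¹ • (Q x + a + b(x,x))`, which is monotone on the
nonnegative orthant, so `F(y) ≥ 0` says `g y ≤ y` and `g` maps `[0, y]` into itself.
Knaster–Tarski gives a least fixed point `x*` of `g` on `[0, y]`. For any nonnegative solution
`t`, the vector `t ⊓ y` satisfies `g (t ⊓ y) ≤ t ⊓ y`, hence `x* ≤ t ⊓ y ≤ t`.
-/

open Matrix Filter Topology

theorem exists_isLeast_fixedPoints_of_map_le {α : Type*} [ConditionallyCompleteLattice α]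
    {f : α → α} {l y : α} (hly : l ≤ y) (hf : MonotoneOn f (Set.Ici l))
    (hlf : ∀ x, l ≤ x → l ≤ f x) (hfy : f y ≤ y) :
    ∃ x, IsLeast {t | l ≤ t ∧ f t = t} x ∧ x ≤ y := by
  have : Fact (l ≤ y) := ⟨hly⟩
  have hmaps (x : Set.Icc l y) : f x ∈ Set.Icc l y :=
    ⟨hlf x x.2.1, (hf x.2.1 hly x.2.2).trans hfy⟩
  let F : Set.Icc l y →o Set.Icc l y :=
    ⟨fun x => ⟨f x, hmaps x⟩, fun u v huv => hf u.2.1 v.2.1 huv⟩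
  refine ⟨F.lfp, ⟨⟨F.lfp.2.1, congrArg Subtype.val F.map_lfp⟩, ?_⟩, F.lfp.2.2⟩
  rintro t ⟨hlt, hft⟩
  have hmem : t ⊓ y ∈ Set.Icc l y := ⟨le_inf hlt hly, inf_le_right⟩
  have hpre : F ⟨t ⊓ y, hmem⟩ ≤ ⟨t ⊓ y, hmem⟩ :=
    show f (t ⊓ y) ≤ t ⊓ y from
      le_inf ((hf hmem.1 hlt inf_le_left).trans hft.le) ((hf hmem.1 hly inf_le_right).trans hfy)
  exact (Subtype.coe_le_coe.mpr (F.lfp_le hpre)).trans inf_le_left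

theorem Matrix.mulVec_mono_of_nonneg {R m n : Type*} [Semiring R] [PartialOrder R]
    [IsOrderedRing R] [Fintype n] {Q : Matrix m n R} (hQ : ∀ i j, 0 ≤ Q i j) {u v : n → R}
    (huv : u ≤ v) : Q *ᵥ u ≤ Q *ᵥ v :=
  fun i => dotProduct_le_dotProduct_of_nonneg_left huv (hQ i)

theorem LinearMap.apply_self_le_apply_self_of_nonneg {R E F : Type*} [CommRing R]
    [AddCommGroup E] [PartialOrder E] [IsOrderedAddMonoid E] [Module R E]
    [AddCommGroup F] [PartialOrder F] [IsOrderedAddMonoid F] [Module R F]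
    {b : E →ₗ[R] E →ₗ[R] F} (hb : ∀ x y, 0 ≤ x → 0 ≤ y → 0 ≤ b x y)
    {u v : E} (hu : 0 ≤ u) (huv : u ≤ v) : b u u ≤ b v v := by
  have hvu : 0 ≤ v - u := sub_nonneg.mpr huv
  calc b u u ≤ b u v := sub_nonneg.mp (by simpa using hb u (v - u) hu hvu)
    _ ≤ b v v := sub_nonneg.mp (by simpa using hb (v - u) v hvu (hu.trans huv))

theorem IsMMat.exists_pos_eq_smul_one_sub {n : ℕ} {M : Matrix (Fin n) (Fin n) ℝ}
    (hM : IsMMat M) :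
    ∃ σ : ℝ, 0 < σ ∧ ∃ Q : Matrix (Fin n) (Fin n) ℝ, (∀ i j, 0 ≤ Q i j) ∧ M = σ • 1 - Q := by
  obtain ⟨s, P, hP, -, rfl⟩ := hM
  have hshift : 0 ≤ |s| + 1 - s := by linarith [le_abs_self s]
  refine ⟨|s| + 1, by positivity, P + (|s| + 1 - s) • 1, fun i j => ?_, by module⟩
  have hone : (0 : ℝ) ≤ (1 : Matrix (Fin n) (Fin n) ℝ) i j := by
    rw [one_apply]; split_ifs <;> norm_num
  simpa using add_nonneg (hP i j) (mul_nonneg hshift hone)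

section QVE

variable {ι : Type*} [Fintype ι] {σ : ℝ} {Q : Matrix ι ι ℝ} {a : ι → ℝ}
  {b : (ι → ℝ) →ₗ[ℝ] (ι → ℝ) →ₗ[ℝ] (ι → ℝ)}

variable (σ Q a b) in
noncomputable def qveFixedPointMap (x : ι → ℝ) : ι → ℝ :=
  σ⁻¹ • (Q *ᵥ x + a + b x x)

theorem qveFixedPointMap_eq_self_iff [DecidableEq ι] (hσ : σ ≠ 0) {x : ι → ℝ} :
    qveFixedPointMap σ Q a b x = x ↔ (σ • 1 - Q) *ᵥ x = a + b x x := by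
  rw [qveFixedPointMap, inv_smul_eq_iff₀ hσ, sub_mulVec, smul_mulVec, one_mulVec,
    sub_eq_iff_eq_add', ← add_assoc, eq_comm]

theorem qveFixedPointMap_nonneg (hσ : 0 ≤ σ) (hQ : ∀ i j, 0 ≤ Q i j) (ha : 0 ≤ a)
    (hb : ∀ x y, 0 ≤ x → 0 ≤ y → 0 ≤ b x y) {x : ι → ℝ} (hx : 0 ≤ x) :
    0 ≤ qveFixedPointMap σ Q a b x := by
  have hQx : 0 ≤ Q *ᵥ x := by simpa using mulVec_mono_of_nonneg hQ hx
  exact smul_nonneg (inv_nonneg.mpr hσ) (add_nonneg (add_nonneg hQx ha) (hb x x hx hx))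

theorem qveFixedPointMap_monotoneOn (hσ : 0 ≤ σ) (hQ : ∀ i j, 0 ≤ Q i j)
    (hb : ∀ x y, 0 ≤ x → 0 ≤ y → 0 ≤ b x y) :
    MonotoneOn (qveFixedPointMap σ Q a b) (Set.Ici 0) := by
  intro u hu v _ huv
  unfold qveFixedPointMap
  gcongr
  · exact mulVec_mono_of_nonneg hQ huv
  · exact LinearMap.apply_self_le_apply_self_of_nonneg hb hu huv

theorem qveFixedPointMap_le_of_supersolution [DecidableEq ι] (hσ : 0 < σ) {y : ι → ℝ}
    (hFy : a + b y y ≤ (σ • 1 - Q) *ᵥ y) : qveFixedPointMap σ Q a b y ≤ y := by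
  rw [sub_mulVec, smul_mulVec, one_mulVec, le_sub_iff_add_le'] at hFy
  rw [qveFixedPointMap, inv_smul_le_iff_of_pos hσ, add_assoc]
  exact hFy

theorem exists_isLeast_qve_solution_of_supersolution [DecidableEq ι]
    (hσ : 0 < σ) (hQ : ∀ i j, 0 ≤ Q i j) (ha : 0 ≤ a) (hb : ∀ x y, 0 ≤ x → 0 ≤ y → 0 ≤ b x y) {y : ι → ℝ} (hy : 0 ≤ y)
    (hFy : a + b y y ≤ (σ • 1 - Q) *ᵥ y) :
    ∃ xs, IsLeast {t | 0 ≤ t ∧ (σ • 1 - Q) *ᵥ t = a + b t t} xs ∧ xs ≤ y := by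
  have hsol : {t | 0 ≤ t ∧ (σ • 1 - Q) *ᵥ t = a + b t t} =
      {t | 0 ≤ t ∧ qveFixedPointMap σ Q a b t = t} := by
    simp only [qveFixedPointMap_eq_self_iff hσ.ne']
  rw [hsol]
  exact exists_isLeast_fixedPoints_of_map_le hy (qveFixedPointMap_monotoneOn hσ.le hQ hb)
    (fun _ => qveFixedPointMap_nonneg hσ.le hQ ha hb)
    (qveFixedPointMap_le_of_supersolution hσ hFy)

end QVE

/-- If there exists `y ≥ 0` with `F(y) ≥ 0`, i.e. `M y ≥ a + b(y,y)`, then the QVE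
`M x = a + b(x,x)` has a minimal nonnegative solution `x*`, and `x* ≤ y`. -/
theorem qve_minimal_solution_of_supersolution {n : ℕ} (M : Matrix (Fin n) (Fin n) ℝ)
    (hM : IsNsMMat M) (a : Fin n → ℝ) (ha : 0 ≤ a)
    (b : (Fin n → ℝ) →ₗ[ℝ] (Fin n → ℝ) →ₗ[ℝ] (Fin n → ℝ))
    (hb : ∀ x y : Fin n → ℝ, 0 ≤ x → 0 ≤ y → 0 ≤ b x y)
    (y : Fin n → ℝ) (hy : 0 ≤ y) (hFy : a + b y y ≤ M *ᵥ y) :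
    ∃ xs : Fin n → ℝ, 0 ≤ xs ∧ M *ᵥ xs = a + b xs xs ∧
      (∀ s : Fin n → ℝ, 0 ≤ s → M *ᵥ s = a + b s s → xs ≤ s) ∧ xs ≤ y := by
  obtain ⟨σ, hσ, Q, hQ, rfl⟩ := hM.1.exists_pos_eq_smul_one_sub
  obtain ⟨xs, ⟨⟨hxs, hsol⟩, hleast⟩, hxy⟩ :=
    exists_isLeast_qve_solution_of_supersolution hσ hQ ha hb hy hFy
  exact ⟨xs, hxs, hsol, fun s hs hs' => hleast ⟨hs, hs'⟩, hxy⟩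
end

section
/- Let A, B, C be m×m real matrices with A, B, C ≥ 0 entrywise, (A + B + C)e = e where e is the all-ones vector, and I − B nonsingular. Then for every m×m matrix X with X ≥ 0 and Xe ≤ e, the matrix X' := (I − B)⁻¹(A + C X²) satisfies X'e ≤ e. Consequently, the iterates X₀ = 0, X_{k+1} = (I − B)⁻¹(A + C X_k²) satisfy X_k e ≤ e for all k. -/
/-!
Since `(1 - B) e = (A + C) e`, the bound `X' e ≤ e` amounts to
`(1 - B)⁻¹ (A e + C X² e) ≤ (1 - B)⁻¹ (A e + C e)`, which holds because `X² e ≤ e` and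
`(1 - B)⁻¹ ≥ 0`. The latter is the M-matrix property of `1 - B`: for `t < 1` the matrix
`t • B` has ∞-operator norm `< 1`, so `(1 - t • B)⁻¹ = ∑ (t • B)^k ≥ 0`, and letting `t → 1`
the nonsingularity of `1 - B` makes inversion continuous there. The iterates stay nonnegative
with `X_k e ≤ e` by induction.
-/

open Matrix Filter Set Topology

namespace Matrix

section Nonneg

variable {m n R : Type*} [Fintype n] [Semiring R] [PartialOrder R] [IsOrderedRing R]

lemma nonneg_mul {M N : Matrix n n R} (hM : ∀ i j, 0 ≤ M i j) (hN : ∀ i j, 0 ≤ N i j) :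
    ∀ i j, 0 ≤ (M * N) i j :=
  fun i j => Finset.sum_nonneg fun k _ => mul_nonneg (hM i k) (hN k j)

lemma nonneg_pow [DecidableEq n] {M : Matrix n n R} (hM : ∀ i j, 0 ≤ M i j) (k : ℕ) :
    ∀ i j, 0 ≤ (M ^ k) i j := by
  induction k with
  | zero => intro i j; rw [pow_zero, one_apply]; split_ifs <;> simp
  | succ k ih => rw [pow_succ]; exact nonneg_mul ih hM

lemma mulVec_mono_of_nonneg_s6 {M : Matrix m n R} (hM : ∀ i j, 0 ≤ M i j) {x y : n → R}
    (hxy : x ≤ y) : M *ᵥ x ≤ M *ᵥ y :=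
  fun i => dotProduct_le_dotProduct_of_nonneg_left hxy (hM i)

lemma mulVec_nonneg_of_nonneg {M : Matrix m n R} (hM : ∀ i j, 0 ≤ M i j) {x : n → R}
    (hx : 0 ≤ x) : 0 ≤ M *ᵥ x :=
  fun i => dotProduct_nonneg_of_nonneg (hM i) hx

end Nonneg

lemma isClosed_setOf_nonneg {m n R : Type*} [Zero R] [Preorder R] [TopologicalSpace R]
    [OrderClosedTopology R] : IsClosed {M : Matrix m n R | ∀ i j, 0 ≤ M i j} := by
  simp only [ofPred_forall]
  exact isClosed_iInter fun i => isClosed_iInter fun j =>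
    isClosed_le continuous_const (continuous_id.matrix_elem i j)

section InverseNonneg

attribute [local instance] Matrix.linftyOpNormedRing Matrix.linftyOpNormedAlgebra

variable {n : Type*} [Fintype n] [DecidableEq n]

lemma linfty_opNorm_le_one_of_nonneg {B : Matrix n n ℝ} (hB : ∀ i j, 0 ≤ B i j)
    (hBe : B *ᵥ 1 ≤ 1) : ‖B‖ ≤ 1 := by
  rw [linfty_opNorm_def, ← NNReal.coe_one, NNReal.coe_le_coe]
  refine Finset.sup_le fun i _ => ?_
  rw [← NNReal.coe_le_coe]
  have hrow : ∑ j, B i j ≤ 1 := by simpa [mulVec, dotProduct] using hBe i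
  simpa [abs_of_nonneg (hB i _)] using hrow

lemma nonneg_ringInverse_one_sub_smul {B : Matrix n n ℝ} (hB : ∀ i j, 0 ≤ B i j)
    (hBe : B *ᵥ 1 ≤ 1) {t : ℝ} (ht : t ∈ Ico 0 1) :
    ∀ i j, 0 ≤ Ring.inverse (1 - t • B) i j := by
  have hnorm : ‖t • B‖ < 1 := by
    rw [norm_smul, Real.norm_of_nonneg ht.1]
    nlinarith [linfty_opNorm_le_one_of_nonneg hB hBe, norm_nonneg B, ht.1, ht.2]
  have htB : ∀ i j, 0 ≤ (t • B) i j := fun i j => mul_nonneg ht.1 (hB i j)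
  refine isClosed_setOf_nonneg.mem_of_tendsto
    (hasSum_geom_series_inverse (t • B) hnorm).tendsto_sum_nat (Eventually.of_forall fun N => ?_)
  intro i j
  rw [sum_apply]
  exact Finset.sum_nonneg fun k _ => nonneg_pow htB k i j

lemma nonneg_inv_one_sub {B : Matrix n n ℝ} (hB : ∀ i j, 0 ≤ B i j) (hBe : B *ᵥ 1 ≤ 1)
    (hdet : IsUnit (1 - B).det) : ∀ i j, 0 ≤ (1 - B)⁻¹ i j := by
  obtain ⟨u, hu⟩ := (isUnit_iff_isUnit_det _).mpr hdet
  have hcont : ContinuousAt (fun t : ℝ => Ring.inverse (1 - t • B)) 1 := by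
    have hinv : ContinuousAt Ring.inverse (1 - (1 : ℝ) • B) := by
      rw [one_smul, ← hu]
      exact NormedRing.inverse_continuousAt u
    exact hinv.comp (f := fun t : ℝ => 1 - t • B) (by fun_prop)
  have hlim : Tendsto (fun t : ℝ => Ring.inverse (1 - t • B)) (𝓝[<] 1)
      (𝓝 (1 - B)⁻¹) := by
    simpa [nonsing_inv_eq_ringInverse] using hcont.tendsto.mono_left nhdsWithin_le_nhds
  refine isClosed_setOf_nonneg.mem_of_tendsto hlim ?_
  filter_upwards [Ico_mem_nhdsLT (show (0 : ℝ) < 1 by norm_num)] with t ht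
  exact nonneg_ringInverse_one_sub_smul hB hBe ht

end InverseNonneg

end Matrix

section FixedPointIteration

variable {n : Type*} [Fintype n] [DecidableEq n] {A B C X : Matrix n n ℝ}

/-- The equation `X = A + B X + C X²` solved for the `B X` term. -/
noncomputable def fixedPointMap (A B C X : Matrix n n ℝ) : Matrix n n ℝ :=
  (1 - B)⁻¹ * (A + C * X ^ 2)

omit [DecidableEq n] in
lemma mulVec_one_le_one_of_add_mulVec_one_eq (hA : ∀ i j, 0 ≤ A i j)
    (hC : ∀ i j, 0 ≤ C i j) (hstoch : (A + B + C) *ᵥ 1 = 1) : B *ᵥ 1 ≤ 1 := by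
  rw [add_mulVec, add_mulVec] at hstoch
  intro i
  have hsum := congrFun hstoch i
  have hAe : 0 ≤ (A *ᵥ 1) i := mulVec_nonneg_of_nonneg hA zero_le_one i
  have hCe : 0 ≤ (C *ᵥ 1) i := mulVec_nonneg_of_nonneg hC zero_le_one i
  simp only [Pi.add_apply, Pi.one_apply] at hsum ⊢
  linarith

lemma fixedPointMap_nonneg (hA : ∀ i j, 0 ≤ A i j) (hB : ∀ i j, 0 ≤ B i j)
    (hC : ∀ i j, 0 ≤ C i j) (hstoch : (A + B + C) *ᵥ 1 = 1) (hdet : IsUnit (1 - B).det)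
    (hX : ∀ i j, 0 ≤ X i j) : ∀ i j, 0 ≤ fixedPointMap A B C X i j := by
  have hBe := mulVec_one_le_one_of_add_mulVec_one_eq hA hC hstoch
  exact nonneg_mul (nonneg_inv_one_sub hB hBe hdet) fun i j =>
    add_nonneg (hA i j) (nonneg_mul hC (nonneg_pow hX 2) i j)

lemma fixedPointMap_mulVec_one_le (hA : ∀ i j, 0 ≤ A i j) (hB : ∀ i j, 0 ≤ B i j)
    (hC : ∀ i j, 0 ≤ C i j) (hstoch : (A + B + C) *ᵥ 1 = 1) (hdet : IsUnit (1 - B).det)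
    (hX : ∀ i j, 0 ≤ X i j) (hXe : X *ᵥ 1 ≤ 1) : fixedPointMap A B C X *ᵥ 1 ≤ 1 := by
  have hBe := mulVec_one_le_one_of_add_mulVec_one_eq hA hC hstoch
  have hX2e : X ^ 2 *ᵥ 1 ≤ 1 := by
    rw [sq, ← mulVec_mulVec]
    exact (mulVec_mono_of_nonneg_s6 hX hXe).trans hXe
  have hAC : A *ᵥ 1 + C *ᵥ 1 = (1 - B) *ᵥ 1 :=
    calc A *ᵥ 1 + C *ᵥ 1 = (A + B + C) *ᵥ 1 - B *ᵥ 1 := by rw [add_mulVec, add_mulVec]; abel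
      _ = (1 - B) *ᵥ 1 := by rw [hstoch, sub_mulVec, one_mulVec]
  calc fixedPointMap A B C X *ᵥ 1 = (1 - B)⁻¹ *ᵥ (A *ᵥ 1 + C *ᵥ (X ^ 2 *ᵥ 1)) := by
        rw [fixedPointMap, ← mulVec_mulVec, add_mulVec, mulVec_mulVec]
    _ ≤ (1 - B)⁻¹ *ᵥ (A *ᵥ 1 + C *ᵥ 1) :=
        mulVec_mono_of_nonneg_s6 (nonneg_inv_one_sub hB hBe hdet)
          (add_le_add_right (mulVec_mono_of_nonneg_s6 hC hX2e) _)
    _ = 1 := by rw [hAC, mulVec_mulVec, nonsing_inv_mul _ hdet, one_mulVec]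

end FixedPointIteration

/-- For the unilateral quadratic matrix equation `X = A + B X + C X²` with
`A, B, C ≥ 0`, `(A+B+C) e = e` and `I - B` nonsingular: every `X ≥ 0` with `X e ≤ e`
yields `X' = (I-B)⁻¹(A + C X²)` with `X' e ≤ e`; consequently the fixed-point iterates
starting from `X₀ = 0` satisfy `X_k e ≤ e` for all `k`. -/
theorem unilateral_iterates_bounded {m : ℕ} (A B C : Matrix (Fin m) (Fin m) ℝ)
    (hA : ∀ i j, 0 ≤ A i j) (hB : ∀ i j, 0 ≤ B i j) (hC : ∀ i j, 0 ≤ C i j)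
    (hstoch : (A + B + C) *ᵥ (1 : Fin m → ℝ) = (1 : Fin m → ℝ))
    (hns : IsUnit (1 - B).det) :
    (∀ X : Matrix (Fin m) (Fin m) ℝ, (∀ i j, 0 ≤ X i j) →
      X *ᵥ (1 : Fin m → ℝ) ≤ (1 : Fin m → ℝ) →
      ((1 - B)⁻¹ * (A + C * X ^ 2)) *ᵥ (1 : Fin m → ℝ) ≤ (1 : Fin m → ℝ)) ∧
    (∀ X : ℕ → Matrix (Fin m) (Fin m) ℝ, X 0 = 0 →
      (∀ k, X (k + 1) = (1 - B)⁻¹ * (A + C * (X k) ^ 2)) →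
      ∀ k, X k *ᵥ (1 : Fin m → ℝ) ≤ (1 : Fin m → ℝ)) := by
  refine ⟨fun X hX hXe => fixedPointMap_mulVec_one_le hA hB hC hstoch hns hX hXe,
    fun X h0 hrec k => ?_⟩
  have invariant : ∀ k, (∀ i j, 0 ≤ X k i j) ∧ X k *ᵥ 1 ≤ 1 := by
    intro k
    induction k with
    | zero => simp [h0]
    | succ k ih =>
      rw [hrec k]
      exact ⟨fixedPointMap_nonneg hA hB hC hstoch hns ih.1,
        fixedPointMap_mulVec_one_le hA hB hC hstoch hns ih.1 ih.2⟩
  exact (invariant k).2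
end

section
/- Let a ∈ ℝⁿ with a ≥ 0, let P be an n×n matrix with P ≥ 0, and let b : ℝⁿ × ℝⁿ → ℝⁿ be bilinear with b(x,y) ≥ 0 whenever x, y ≥ 0. Let (x_k) be generated by the fixed-point iteration x_{k+1} = a + P x_k + b(x_k, x_k) from some x₀ ≥ 0, and suppose (x_k) is entrywise nondecreasing and converges to a limit x* with x* > x₀ (strict entrywise inequality). Then ρ(P + b(x*,·) + b(·,x*)) ≤ 1, where P + b(x*,·) + b(·,x*) denotes the matrix of the linear map w ↦ Pw + b(x*, w) + b(w, x*) and ρ denotes the spectral radius. -/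
open Matrix Filter Topology

/-!
Write `d k = xs - x k ≥ 0` and `L` for the derivative at `xs`. Subtracting the iteration from
the fixed-point equation gives `d (k+1) = L (d k) - b (d k) (d k)`, and `0 ≤ d k ≤ t • xs`
forces `b (d k) (d k) ≤ (t/2) • L (d k)`; hence `d (k+1) ≥ (1 - t/2) • L (d k)`, with `t = 1`
always and with `t → 0` as `k → ∞`. An eigenvalue `μ` of `L` gives, through the moduli of an
eigenvector, some `u ≥ 0`, `u ≠ 0` with `‖μ‖ • u ≤ L u`. As `d 0 > 0`, some `r • u ≤ d 0`,
and a bound `r • u ≤ d k` becomes `(r * c * ‖μ‖) • u ≤ d (k+1)` whenever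
`d (k+1) ≥ c • L (d k)`. If `‖μ‖ > 1`, pick `θ < 1` with `θ * ‖μ‖ > 1`: from some index on the
lower bound grows geometrically, whereas `d k ≤ d 0`.
-/

section OrderedModule

variable {E : Type*} [AddCommGroup E] [PartialOrder E] [IsOrderedAddMonoid E] [Module ℝ E]
  [PosSMulMono ℝ E]

theorem mul_pow_smul_le_of_smul_map_le {f : E →ₗ[ℝ] E} (hf : ∀ x, 0 ≤ x → 0 ≤ f x)
    {c l r : ℝ} (hc : 0 ≤ c) (hl : 0 ≤ l) (hr : 0 ≤ r) {u : E} (hu : l • u ≤ f u)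
    {d : ℕ → E} {K : ℕ} (hd : ∀ k ≥ K, c • f (d k) ≤ d (k + 1)) (hdK : r • u ≤ d K) :
    ∀ m, (r * (c * l) ^ m) • u ≤ d (K + m) := by
  intro m
  induction m with
  | zero => simpa using hdK
  | succ m ih =>
    have hrm : 0 ≤ r * (c * l) ^ m := by positivity
    have hmono : f ((r * (c * l) ^ m) • u) ≤ f (d (K + m)) := by
      simpa using hf _ (sub_nonneg.2 ih)
    calc (r * (c * l) ^ (m + 1)) • u = c • (r * (c * l) ^ m) • (l • u) := by
          rw [smul_smul, smul_smul]; ring_nf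
      _ ≤ c • f ((r * (c * l) ^ m) • u) := by
          rw [map_smul]
          exact smul_le_smul_of_nonneg_left (smul_le_smul_of_nonneg_left hu hrm) hc
      _ ≤ c • f (d (K + m)) := smul_le_smul_of_nonneg_left hmono hc
      _ ≤ d (K + (m + 1)) := hd _ (Nat.le_add_right K m)

end OrderedModule

theorem isFixedPt_of_tendsto_of_succ_eq {α : Type*} [TopologicalSpace α] [T2Space α]
    {F : α → α} {x : ℕ → α} {y : α} (hF : ContinuousAt F y) (hrec : ∀ k, x (k + 1) = F (x k))
    (hlim : Tendsto x atTop (𝓝 y)) : Function.IsFixedPt F y :=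
  tendsto_nhds_unique (by simpa [Function.comp_def, hrec] using hF.tendsto.comp hlim)
    (hlim.comp (tendsto_add_atTop_nat 1))

theorem exists_pos_smul_le {ι : Type*} [Finite ι] (u : ι → ℝ) {d : ι → ℝ}
    (hd : ∀ i, 0 < d i) : ∃ r : ℝ, 0 < r ∧ r • u ≤ d := by
  have hlim : Tendsto (fun r : ℝ => r • u) (𝓝[>] 0) (𝓝 0) := by
    simpa using ((tendsto_id (x := 𝓝 (0 : ℝ))).mono_left nhdsWithin_le_nhds).smul_const u
  exact ((hlim.eventually_mem (pi_Iic_mem_nhds hd)).and self_mem_nhdsWithin).exists.imp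
    fun r hr => ⟨hr.2, hr.1⟩

theorem le_one_of_smul_le_map {ι : Type*} [Finite ι] {f : (ι → ℝ) →ₗ[ℝ] (ι → ℝ)}
    (hf : ∀ x, 0 ≤ x → 0 ≤ f x) {d : ℕ → ι → ℝ} (hd0 : ∀ i, 0 < d 0 i) (hd : Antitone d)
    {c : ℝ} (hc : 0 < c) (hdc : ∀ k, c • f (d k) ≤ d (k + 1))
    (hdθ : ∀ θ : ℝ, θ < 1 → ∀ᶠ k in atTop, θ • f (d k) ≤ d (k + 1))
    {l : ℝ} {u : ι → ℝ} (hu : 0 ≤ u) (hu0 : u ≠ 0) (hlu : l • u ≤ f u) : l ≤ 1 := by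
  by_contra! hl
  obtain ⟨θ, hlθ, hθ⟩ := exists_between (inv_lt_one_of_one_lt₀ hl)
  have hθ0 : 0 ≤ θ := ((inv_pos.2 (by linarith)).trans hlθ).le
  have hθl : 1 < θ * l := by rwa [inv_lt_iff_one_lt_mul₀ (by linarith)] at hlθ
  obtain ⟨K, hK⟩ := eventually_atTop.1 (hdθ θ hθ)
  obtain ⟨r, hr, hru⟩ := exists_pos_smul_le u hd0
  set r' := r * (c * l) ^ K
  have hr'u : r' • u ≤ d K := by
    simpa using mul_pow_smul_le_of_smul_map_le hf hc.le (by linarith) hr.le hlu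
      (K := 0) (fun k _ => hdc k) hru K
  have hgrow := mul_pow_smul_le_of_smul_map_le hf hθ0 (by linarith) (by positivity) hlu hK hr'u
  obtain ⟨i, hi⟩ := Function.ne_iff.1 hu0
  have hui : 0 < u i := lt_of_le_of_ne (hu i) (Ne.symm hi)
  obtain ⟨m, hm⟩ := pow_unbounded_of_one_lt (d 0 i / (r' * u i)) hθl
  have hbound : r' * (θ * l) ^ m * u i ≤ d 0 i :=
    (hgrow m i).trans (hd (Nat.zero_le _) i)
  rw [div_lt_iff₀ (by positivity)] at hm
  nlinarith

theorem exists_nonneg_ne_zero_norm_smul_le_mulVec {ι : Type*} [Fintype ι] [DecidableEq ι]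
    {A : Matrix ι ι ℝ} (hA : ∀ i j, 0 ≤ A i j) {μ : ℂ}
    (hμ : μ ∈ spectrum ℂ (A.map Complex.ofReal)) :
    ∃ u : ι → ℝ, 0 ≤ u ∧ u ≠ 0 ∧ ‖μ‖ • u ≤ A *ᵥ u := by
  rw [← Matrix.spectrum_toLin', ← Module.End.hasEigenvalue_iff_mem_spectrum] at hμ
  obtain ⟨v, hv⟩ := hμ.exists_hasEigenvector
  have hAv : A.map Complex.ofReal *ᵥ v = μ • v := by
    simpa using hv.apply_eq_smul
  refine ⟨fun i => ‖v i‖, fun i => norm_nonneg _, ?_, fun i => ?_⟩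
  · obtain ⟨i, hi⟩ := Function.ne_iff.1 hv.2
    exact Function.ne_iff.2 ⟨i, by simpa using hi⟩
  calc ‖μ‖ * ‖v i‖ = ‖∑ j, (A i j : ℂ) * v j‖ := by
        rw [← norm_mul, ← smul_eq_mul, ← Pi.smul_apply, ← hAv]; rfl
    _ ≤ ∑ j, A i j * ‖v j‖ := by
        refine (norm_sum_le _ _).trans_eq (Finset.sum_congr rfl fun j _ => ?_)
        rw [norm_mul, Complex.norm_real, Real.norm_of_nonneg (hA i j)]

section QuadraticMap

variable {ι : Type*} [Fintype ι] {P : Matrix ι ι ℝ}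
  {b : (ι → ℝ) →ₗ[ℝ] (ι → ℝ) →ₗ[ℝ] (ι → ℝ)}

theorem continuous_quadratic (a : ι → ℝ) : Continuous fun y => a + P *ᵥ y + b y y := by
  have hb := (LinearMap.toContinuousLinearMap.toLinearMap ∘ₗ b).continuous_of_finiteDimensional
  exact (continuous_const.add (by fun_prop)).add (hb.clm_apply continuous_id)

def quadraticDeriv (P : Matrix ι ι ℝ) (b : (ι → ℝ) →ₗ[ℝ] (ι → ℝ) →ₗ[ℝ] (ι → ℝ))
    (s : ι → ℝ) : (ι → ℝ) →ₗ[ℝ] (ι → ℝ) :=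
  P.mulVecLin + b s + b.flip s

theorem quadraticDeriv_apply (s w : ι → ℝ) :
    quadraticDeriv P b s w = P *ᵥ w + b s w + b w s :=
  rfl

theorem toMatrix'_quadraticDeriv [DecidableEq ι] (s : ι → ℝ) :
    LinearMap.toMatrix' (quadraticDeriv P b s) =
      P + LinearMap.toMatrix' (b s) + LinearMap.toMatrix' (b.flip s) := by
  simp [quadraticDeriv, ← Matrix.toLin'_apply']

theorem Matrix.mulVec_nonneg_s8 (hP : ∀ i j, 0 ≤ P i j) {w : ι → ℝ} (hw : 0 ≤ w) :
    0 ≤ P *ᵥ w :=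
  fun i => Finset.sum_nonneg fun j _ => mul_nonneg (hP i j) (hw j)

theorem quadraticDeriv_nonneg (hP : ∀ i j, 0 ≤ P i j)
    (hb : ∀ x y : ι → ℝ, 0 ≤ x → 0 ≤ y → 0 ≤ b x y) {s w : ι → ℝ} (hs : 0 ≤ s) (hw : 0 ≤ w) :
    0 ≤ quadraticDeriv P b s w := by
  rw [quadraticDeriv_apply]
  exact add_nonneg (add_nonneg (Matrix.mulVec_nonneg_s8 hP hw) (hb s w hs hw)) (hb w s hw hs)

theorem sub_quadratic_eq (a s y : ι → ℝ) :
    (a + P *ᵥ s + b s s) - (a + P *ᵥ y + b y y) =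
      quadraticDeriv P b s (s - y) - b (s - y) (s - y) := by
  simp only [quadraticDeriv_apply, map_sub, LinearMap.sub_apply]
  abel

theorem one_sub_half_smul_quadraticDeriv_le (hP : ∀ i j, 0 ≤ P i j)
    (hb : ∀ x y : ι → ℝ, 0 ≤ x → 0 ≤ y → 0 ≤ b x y) {s d : ι → ℝ} {t : ℝ} (ht : 0 ≤ t)
    (hd : 0 ≤ d) (hds : d ≤ t • s) :
    (1 - t / 2) • quadraticDeriv P b s d ≤ quadraticDeriv P b s d - b d d := by
  have hts : 0 ≤ t • s - d := sub_nonneg.2 hds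
  intro i
  have hleft := hb _ _ hts hd i
  have hright := hb _ _ hd hts i
  have hPd := Matrix.mulVec_nonneg_s8 hP hd i
  simp only [map_sub, map_smul, LinearMap.sub_apply, LinearMap.smul_apply, Pi.sub_apply,
    Pi.smul_apply, smul_eq_mul, Pi.zero_apply] at hleft hright hPd ⊢
  simp only [quadraticDeriv_apply, Pi.add_apply]
  nlinarith [mul_nonneg ht hPd]

theorem one_sub_half_smul_quadraticDeriv_le_sub (hP : ∀ i j, 0 ≤ P i j)
    (hb : ∀ x y : ι → ℝ, 0 ≤ x → 0 ≤ y → 0 ≤ b x y) {a s y : ι → ℝ}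
    (hfix : a + P *ᵥ s + b s s = s) (hy : y ≤ s) {t : ℝ} (ht : 0 ≤ t) (hsy : s - y ≤ t • s) :
    (1 - t / 2) • quadraticDeriv P b s (s - y) ≤ s - (a + P *ᵥ y + b y y) := by
  calc (1 - t / 2) • quadraticDeriv P b s (s - y)
      ≤ quadraticDeriv P b s (s - y) - b (s - y) (s - y) :=
        one_sub_half_smul_quadraticDeriv_le hP hb ht (sub_nonneg.2 hy) hsy
    _ = s - (a + P *ᵥ y + b y y) := by rw [← sub_quadratic_eq a, hfix]

end QuadraticMap

theorem fixed_point_derivative_specRad_le_one_general {n : ℕ}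
    (a : Fin n → ℝ)
    (P : Matrix (Fin n) (Fin n) ℝ) (hP : ∀ i j, 0 ≤ P i j)
    (b : (Fin n → ℝ) →ₗ[ℝ] (Fin n → ℝ) →ₗ[ℝ] (Fin n → ℝ))
    (hb : ∀ x y : Fin n → ℝ, 0 ≤ x → 0 ≤ y → 0 ≤ b x y)
    (x : ℕ → Fin n → ℝ) (hx0 : 0 ≤ x 0)
    (hrec : ∀ k, x (k + 1) = a + P *ᵥ x k + b (x k) (x k))
    (hmono : Monotone x) (xs : Fin n → ℝ)
    (hlim : Filter.Tendsto x Filter.atTop (nhds xs))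
    (hstrict : ∀ i, x 0 i < xs i) :
    specRad (P + LinearMap.toMatrix' (b xs) + LinearMap.toMatrix' (b.flip xs)) ≤ 1 := by
  have hfix : a + P *ᵥ xs + b xs xs = xs :=
    isFixedPt_of_tendsto_of_succ_eq (continuous_quadratic a).continuousAt hrec hlim
  set d : ℕ → Fin n → ℝ := fun k => xs - x k
  have hstep : ∀ k (t : ℝ), 0 ≤ t → d k ≤ t • xs →
      (1 - t / 2) • quadraticDeriv P b xs (d k) ≤ d (k + 1) := fun k t ht hk => by
    simpa only [d, hrec] using
      one_sub_half_smul_quadraticDeriv_le_sub hP hb hfix (hmono.ge_of_tendsto hlim k) ht hk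
  have hL : ∀ w, 0 ≤ w → 0 ≤ quadraticDeriv P b xs w :=
    fun w => quadraticDeriv_nonneg hP hb fun i => (hx0 i).trans (hstrict i).le
  rw [← toMatrix'_quadraticDeriv]
  refine Real.sSup_le ?_ zero_le_one
  rintro _ ⟨μ, hμ, rfl⟩
  obtain ⟨u, hu, hu0, hμu⟩ := exists_nonneg_ne_zero_norm_smul_le_mulVec
    (A := LinearMap.toMatrix' (quadraticDeriv P b xs))
    (fun i j => hL _ (Pi.single_nonneg.2 zero_le_one) i) hμ
  refine le_one_of_smul_le_map hL (d := d) (fun i => sub_pos.2 (hstrict i))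
    (fun k l hkl => sub_le_sub_left (hmono hkl) xs) one_half_pos (fun k => ?_)
    (fun θ hθ => ?_) hu hu0 (by rwa [LinearMap.toMatrix'_mulVec] at hμu)
  · convert hstep k 1 zero_le_one (by simpa [d] using hx0.trans (hmono k.zero_le)) using 2
    norm_num
  · have ht : 0 < 2 * (1 - θ) := by linarith
    have hsmall : ∀ᶠ k in atTop, d k ≤ (2 * (1 - θ)) • xs :=
      ((tendsto_const_nhds (x := xs)).sub hlim).eventually_mem (pi_Iic_mem_nhds fun i => by
        simpa using mul_pos ht ((hx0 i).trans_lt (hstrict i)))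
    filter_upwards [hsmall] with k hk
    simpa using hstep k _ ht.le hk

/-- If the fixed-point iteration `x_{k+1} = a + P x_k + b(x_k, x_k)` (with `a ≥ 0`,
`P ≥ 0`, `b` bilinear nonnegative) is nondecreasing and converges to `x* > x₀`, then
the spectral radius of the Fréchet derivative `P + b(x*,·) + b(·,x*)` of the
iteration map at `x*` is at most `1`. -/
theorem fixed_point_derivative_specRad_le_one {n : ℕ}
    (a : Fin n → ℝ) (ha : 0 ≤ a)
    (P : Matrix (Fin n) (Fin n) ℝ) (hP : ∀ i j, 0 ≤ P i j)
    (b : (Fin n → ℝ) →ₗ[ℝ] (Fin n → ℝ) →ₗ[ℝ] (Fin n → ℝ))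
    (hb : ∀ x y : Fin n → ℝ, 0 ≤ x → 0 ≤ y → 0 ≤ b x y)
    (x : ℕ → Fin n → ℝ) (hx0 : 0 ≤ x 0)
    (hrec : ∀ k, x (k + 1) = a + P *ᵥ x k + b (x k) (x k))
    (hmono : Monotone x) (xs : Fin n → ℝ)
    (hlim : Filter.Tendsto x Filter.atTop (nhds xs))
    (hstrict : ∀ i, x 0 i < xs i) :
    specRad (P + LinearMap.toMatrix' (b xs) + LinearMap.toMatrix' (b.flip xs)) ≤ 1 :=
  fixed_point_derivative_specRad_le_one_general a P hP b hb x hx0 hrec hmono xs hlim hstrict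
end

section
/- Suppose the QVE Mx = a + b(x,x) has a minimal nonnegative solution x* with x* > 0. If F'_{x*} is nonsingular, then F'_x is a nonsingular M-matrix for every x with 0 ≤ x ≤ x*. If F'_{x*} is irreducible, then F'_x is a nonsingular M-matrix for every x with 0 ≤ x ≤ x* and F'_x ≠ F'_{x*}. -/
open Matrix Filter Topology

/-- A square matrix is irreducible if the directed graph on the indices, with an edge
from `i` to `j` whenever `A i j ≠ 0`, is strongly connected. -/
def IsIrred {n : ℕ} (A : Matrix (Fin n) (Fin n) ℝ) : Prop :=
  ∀ i j : Fin n, i ≠ j → Relation.TransGen (fun p q => A p q ≠ 0) i j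

/-!
Write `M = t • 1 - P` with `t > 0` and `P ≥ 0`, so that `F'_x = t • 1 - Q_x` with
`0 ≤ Q_x ≤ Q_{x*}` entrywise for `0 ≤ x ≤ x*`. A Z-matrix `F` is a nonsingular M-matrix as soon
as `u ≥ 0` and `F u ≤ 0` force `u = 0`: the moduli of an eigenvector of `Q` for an eigenvalue
of modulus at least `t` would be such a `u`. So everything rests on the vectors `u ≥ 0` with
`F'_{x*} u ≤ 0`.

If such a `u` is nonzero and `F'_{x*} u` is strictly negative wherever `b(x*, u)` is not zero,
then `x* - ε u` is, for small `ε > 0`, a nonnegative supersolution of the QVE. By Knaster–Tarski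
it lies above a solution, hence above `x*`, which is absurd. Replacing `u` by `(1 + Q_{x*})^N u`
for large `N` makes the supports of `u` and of `F'_{x*} u` invariant under `F'_{x*}`. Then
either the strictness condition holds, or `F'_{x*}` is block triangular with a singular diagonal
block. If `F'_{x*}` is irreducible, the same argument gives `F'_{x*} u = 0` with `u > 0`, and
this forces `Q_x = Q_{x*}`.
-/

namespace Matrix

variable {ι : Type*} [Fintype ι]

theorem mulVec_nonneg_s10 {Q : Matrix ι ι ℝ} (hQ : ∀ i j, 0 ≤ Q i j) {z : ι → ℝ} (hz : 0 ≤ z) :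
    0 ≤ Q *ᵥ z :=
  fun i => Finset.sum_nonneg fun j _ => mul_nonneg (hQ i j) (hz j)

theorem nonneg_of_mulVec_nonneg [DecidableEq ι] {Q : Matrix ι ι ℝ}
    (hQ : ∀ z, 0 ≤ z → 0 ≤ Q *ᵥ z) (i j : ι) : 0 ≤ Q i j := by
  simpa [mulVec_single_one] using hQ (Pi.single j 1) (Pi.single_nonneg.2 zero_le_one) i

theorem eq_zero_of_mulVec_nonpos {D : Matrix ι ι ℝ} (hD : ∀ i j, 0 ≤ D i j) {u : ι → ℝ}
    (hu : ∀ i, 0 < u i) (h : D *ᵥ u ≤ 0) : D = 0 := by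
  ext i j
  have hle : D i j * u j ≤ (D *ᵥ u) i :=
    Finset.single_le_sum (fun k _ => mul_nonneg (hD i k) (hu k).le) (Finset.mem_univ j)
  exact le_antisymm (nonpos_of_mul_nonpos_left (hle.trans (h i)) (hu j)) (hD i j)

theorem exists_nonneg_smul_le_mulVec_of_mem_spectrum [DecidableEq ι] {Q : Matrix ι ι ℝ}
    (hQ : ∀ i j, 0 ≤ Q i j) {μ : ℂ} (hμ : μ ∈ spectrum ℂ (Q.map Complex.ofReal)) :
    ∃ u : ι → ℝ, 0 ≤ u ∧ u ≠ 0 ∧ ‖μ‖ • u ≤ Q *ᵥ u := by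
  rw [spectrum.mem_iff, Algebra.algebraMap_eq_smul_one, isUnit_iff_isUnit_det,
    isUnit_iff_ne_zero, not_not, ← exists_mulVec_eq_zero_iff] at hμ
  obtain ⟨w, hw0, hw⟩ := hμ
  have heig : Q.map Complex.ofReal *ᵥ w = μ • w := by
    rw [sub_mulVec, smul_mulVec, one_mulVec, sub_eq_zero] at hw
    exact hw.symm
  refine ⟨fun i => ‖w i‖, fun i => norm_nonneg _, fun h => hw0 ?_, fun i => ?_⟩
  · exact funext fun i => norm_eq_zero.1 (congrFun h i)
  calc ‖μ‖ * ‖w i‖ = ‖∑ j, (Q i j : ℂ) * w j‖ := by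
        rw [← norm_mul, ← smul_eq_mul, ← Pi.smul_apply, ← heig]
        simp [mulVec, dotProduct]
    _ ≤ ∑ j, ‖(Q i j : ℂ) * w j‖ := norm_sum_le _ _
    _ = (Q *ᵥ fun i => ‖w i‖) i := by
        simp [mulVec, dotProduct, Complex.norm_real, abs_of_nonneg (hQ _ _)]

theorem le_one_add_pow_mulVec [DecidableEq ι] {Q : Matrix ι ι ℝ} (hQ : ∀ i j, 0 ≤ Q i j)
    {z : ι → ℝ} (hz : 0 ≤ z) (k : ℕ) : z ≤ (1 + Q) ^ k *ᵥ z := by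
  induction k with
  | zero => simp
  | succ k ih =>
    rw [pow_succ', ← mulVec_mulVec, add_mulVec, one_mulVec]
    exact ih.trans (le_add_of_nonneg_right (mulVec_nonneg_s10 hQ (hz.trans ih)))

/-- For a Z-matrix `F` and `z ≥ 0` this says that `F` maps the coordinate subspace on the
support of `z` into itself (see `SupportInvariant.apply_eq_zero`). -/
def SupportInvariant (F : Matrix ι ι ℝ) (z : ι → ℝ) : Prop :=
  ∀ i, z i = 0 → (F *ᵥ z) i = 0

theorem SupportInvariant.neg {F : Matrix ι ι ℝ} {z : ι → ℝ} (h : F.SupportInvariant z) :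
    F.SupportInvariant (-z) := fun i hi => by
  simpa [mulVec_neg] using h i (neg_eq_zero.1 hi)

theorem supportInvariant_smul_one_sub [DecidableEq ι] {F : Matrix ι ι ℝ} {z : ι → ℝ} (t : ℝ) :
    (t • 1 - F).SupportInvariant z ↔ F.SupportInvariant z := by
  refine forall_congr' fun i => imp_congr_right fun hi => ?_
  simp [sub_mulVec, smul_mulVec, hi]

/-- The supports of `(1 + Q) ^ k *ᵥ z` increase with `k`, so they stabilise. -/
theorem exists_supportInvariant_one_add_pow_mulVec [DecidableEq ι] {Q : Matrix ι ι ℝ}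
    (hQ : ∀ i j, 0 ≤ Q i j) {z : ι → ℝ} (hz : 0 ≤ z) :
    ∃ N, ∀ m ≥ N, Q.SupportInvariant ((1 + Q) ^ m *ᵥ z) := by
  have hstep (k : ℕ) : (1 + Q) ^ k *ᵥ z ≤ (1 + Q) ^ (k + 1) *ᵥ z := by
    simpa [pow_succ', mulVec_mulVec] using
      le_one_add_pow_mulVec hQ (hz.trans (le_one_add_pow_mulVec hQ hz k)) 1
  let supp : ℕ →o Set ι := ⟨fun k => {i | 0 < ((1 + Q) ^ k *ᵥ z) i},
    monotone_nat_of_le_succ fun k _ hi => lt_of_lt_of_le hi (hstep k _)⟩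
  obtain ⟨N, hN⟩ := WellFoundedGT.monotone_chain_condition supp
  refine ⟨N, fun m hm i hi => ?_⟩
  have hnext : ¬ 0 < ((1 + Q) ^ (m + 1) *ᵥ z) i := by
    change i ∉ supp (m + 1)
    rw [← hN (m + 1) (by omega), hN m hm]
    simp [supp, hi]
  rw [pow_succ', ← mulVec_mulVec, add_mulVec, one_mulVec, Pi.add_apply, hi, zero_add] at hnext
  exact le_antisymm (not_lt.1 hnext)
    (mulVec_nonneg_s10 hQ (hz.trans (le_one_add_pow_mulVec hQ hz m)) i)

section ZMatrix

variable [DecidableEq ι] {F : Matrix ι ι ℝ} {t : ℝ}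

theorem exists_supportInvariant_le_of_mulVec_nonpos (hF : ∀ i j, 0 ≤ (t • 1 - F) i j)
    {u : ι → ℝ} (hu : 0 ≤ u) (hFu : F *ᵥ u ≤ 0) :
    ∃ U, u ≤ U ∧ F *ᵥ U ≤ F *ᵥ u ∧ F.SupportInvariant U ∧ F.SupportInvariant (F *ᵥ U) := by
  set Q := t • 1 - F
  have hg : 0 ≤ -(F *ᵥ u) := neg_nonneg.2 hFu
  obtain ⟨N₁, hN₁⟩ := exists_supportInvariant_one_add_pow_mulVec hF hu
  obtain ⟨N₂, hN₂⟩ := exists_supportInvariant_one_add_pow_mulVec hF hg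
  set N := max N₁ N₂
  have hcomm : F * (1 + Q) ^ N = (1 + Q) ^ N * F :=
    (((Commute.one_right F).add_right
      (((Commute.one_right F).smul_right t).sub_right (Commute.refl F))).pow_right N).eq
  have hFU : F *ᵥ ((1 + Q) ^ N *ᵥ u) = -((1 + Q) ^ N *ᵥ -(F *ᵥ u)) := by
    rw [mulVec_neg, neg_neg, mulVec_mulVec, hcomm, ← mulVec_mulVec]
  refine ⟨(1 + Q) ^ N *ᵥ u, le_one_add_pow_mulVec hF hu N, ?_, ?_, ?_⟩
  · rw [hFU, neg_le]
    exact le_one_add_pow_mulVec hF hg N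
  · exact (supportInvariant_smul_one_sub t).1 (hN₁ N (le_max_left _ _))
  · rw [hFU]
    exact ((supportInvariant_smul_one_sub t).1 (hN₂ N (le_max_right _ _))).neg

theorem SupportInvariant.apply_eq_zero (hF : ∀ i j, 0 ≤ (t • 1 - F) i j) {z : ι → ℝ}
    (hz : 0 ≤ z) (h : F.SupportInvariant z) {i j : ι} (hi : z i = 0) (hj : 0 < z j) :
    F i j = 0 := by
  have hQz := (supportInvariant_smul_one_sub t).2 h i hi
  have hterm := (Finset.sum_eq_zero_iff_of_nonneg fun k _ => mul_nonneg (hF i k) (hz k)).1 hQz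
    j (Finset.mem_univ j)
  have hij : i ≠ j := by rintro rfl; exact hj.ne' hi
  simpa [one_apply_ne hij, hj.ne'] using hterm

end ZMatrix

/-- `A` is block triangular for the splitting by the zero set of `A *ᵥ v`, and the diagonal
block on that zero set kills the restriction of `v`. -/
theorem det_eq_zero_of_mulVec [DecidableEq ι] {R : Type*} [CommRing R] [IsDomain R]
    {A : Matrix ι ι R} {v : ι → R} (hA : ∀ i j, (A *ᵥ v) i = 0 → (A *ᵥ v) j ≠ 0 → A i j = 0)
    (hv : ∃ i, (A *ᵥ v) i = 0 ∧ v i ≠ 0) : A.det = 0 := by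
  classical
  rw [twoBlockTriangular_det A (fun j => (A *ᵥ v) j ≠ 0)
    fun i hi j hj => hA i j (not_not.1 hi) hj]
  refine mul_eq_zero_of_right _ (exists_mulVec_eq_zero_iff.1 ?_)
  obtain ⟨i₀, hi₀, hv₀⟩ := hv
  refine ⟨fun j => v j, fun h => hv₀ (congrFun h ⟨i₀, not_not.2 hi₀⟩), funext fun i => ?_⟩
  have hsplit := Fintype.sum_subtype_add_sum_subtype (fun j => (A *ᵥ v) j ≠ 0)
    fun j => A i j * v j
  rw [Finset.sum_eq_zero fun j _ => by rw [hA i j (not_not.1 i.2) j.2, zero_mul], zero_add]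
    at hsplit
  exact hsplit.trans (not_not.1 i.2)

end Matrix

theorem IsIrred.forall_of_exists {n : ℕ} {A : Matrix (Fin n) (Fin n) ℝ} (hA : IsIrred A)
    {p : Fin n → Prop} (hp : ∃ j, p j) (hclosed : ∀ i j, ¬ p i → p j → A i j = 0)
    (i : Fin n) : p i := by
  by_contra hi
  obtain ⟨j, hj⟩ := hp
  have hreach : ∀ k, Relation.TransGen (fun p q => A p q ≠ 0) i k → ¬ p k := by
    intro k hk
    induction hk with
    | single h => exact fun hk => h (hclosed _ _ hi hk)
    | tail _ h ih => exact fun hk => h (hclosed _ _ ih hk)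
  exact hreach j (hA i j (by rintro rfl; exact hi hj)) hj

theorem Matrix.SupportInvariant.pos_of_isIrred {n : ℕ} {F : Matrix (Fin n) (Fin n) ℝ} {t : ℝ}
    (hF : ∀ i j, 0 ≤ (t • 1 - F) i j) (hirr : IsIrred F) {z : Fin n → ℝ} (hz : 0 ≤ z)
    (hz0 : z ≠ 0) (h : F.SupportInvariant z) (i : Fin n) : 0 < z i := by
  obtain ⟨j, hj⟩ := Function.ne_iff.1 hz0
  exact hirr.forall_of_exists (p := (0 < z ·)) ⟨j, (hz j).lt_of_ne' hj⟩
    (fun i j hi hj => h.apply_eq_zero hF hz (le_antisymm (not_lt.1 hi) (hz i)) hj) i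

theorem isNsMMat_of_mulVec_nonpos {n : ℕ} {F : Matrix (Fin n) (Fin n) ℝ} {t : ℝ} (ht : 0 ≤ t)
    (hF : ∀ i j, 0 ≤ (t • 1 - F) i j) (h : ∀ u, 0 ≤ u → F *ᵥ u ≤ 0 → u = 0) :
    IsNsMMat F := by
  set Q := t • 1 - F
  have hspec : ∀ μ ∈ spectrum ℂ (Q.map Complex.ofReal), ‖μ‖ < t := by
    intro μ hμ
    obtain ⟨u, hu, hu0, hle⟩ := Matrix.exists_nonneg_smul_le_mulVec_of_mem_spectrum hF hμ
    by_contra! htμ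
    refine hu0 (h u hu ?_)
    rw [show F = t • 1 - Q by simp [Q], Matrix.sub_mulVec, Matrix.smul_mulVec,
      Matrix.one_mulVec, sub_nonpos]
    exact (smul_le_smul_of_nonneg_right htμ hu).trans hle
  refine ⟨⟨t, Q, hF, Real.sSup_le (by rintro r ⟨μ, hμ, rfl⟩; exact (hspec μ hμ).le) ht,
    by simp [Q]⟩, isUnit_iff_ne_zero.2 fun hdet => ?_⟩
  have ht_mem : (t : ℂ) ∈ spectrum ℂ (Q.map Complex.ofReal) := by
    have hmap : (t : ℂ) • (1 : Matrix (Fin n) (Fin n) ℂ) - Q.map Complex.ofReal =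
        Complex.ofRealHom.mapMatrix F := by
      ext i j
      simp only [Q, Matrix.sub_apply, Matrix.smul_apply, Matrix.one_apply, Matrix.map_apply]
      split_ifs <;> simp
    rw [spectrum.mem_iff, Algebra.algebraMap_eq_smul_one, hmap, Matrix.isUnit_iff_isUnit_det,
      ← RingHom.map_det, hdet, map_zero]
    exact not_isUnit_zero
  simpa [abs_of_nonneg ht] using hspec _ ht_mem

theorem exists_nonneg_le_smul_of_apply_eq_zero {ι : Type*} [Fintype ι] {v d : ι → ℝ}
    (hd : 0 ≤ d) (h : ∀ i, d i = 0 → v i ≤ 0) : ∃ C : ℝ, 0 ≤ C ∧ v ≤ C • d := by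
  have hterm : ∀ j, 0 ≤ |v j| / d j := fun j => div_nonneg (abs_nonneg _) (hd j)
  refine ⟨∑ j, |v j| / d j, Finset.sum_nonneg fun j _ => hterm j, fun i => ?_⟩
  rcases (hd i).eq_or_lt with hi | hi
  · simpa [← hi] using h i hi.symm
  calc v i ≤ |v i| / d i * d i := by rw [div_mul_cancel₀ _ hi.ne']; exact le_abs_self _
    _ ≤ (∑ j, |v j| / d j) * d i :=
      mul_le_mul_of_nonneg_right (Finset.single_le_sum (fun j _ => hterm j) (Finset.mem_univ i))
        hi.le

theorem exists_pos_smul_one_sub {ι : Type*} [Fintype ι] [DecidableEq ι] {P : Matrix ι ι ℝ}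
    (hP : ∀ i j, 0 ≤ P i j) (t : ℝ) :
    ∃ s : ℝ, 0 < s ∧ ∃ P' : Matrix ι ι ℝ, (∀ i j, 0 ≤ P' i j) ∧ t • 1 - P = s • 1 - P' := by
  refine ⟨|t| + 1, by positivity, P + (|t| + 1 - t) • 1, fun i j => ?_, by module⟩
  have : 0 ≤ |t| + 1 - t := by linarith [le_abs_self t]
  rw [Matrix.add_apply, Matrix.smul_apply, Matrix.one_apply]
  split_ifs <;> simp [add_nonneg, hP i j, this]

theorem bilin_le_bilin {ι : Type*} {b : (ι → ℝ) →ₗ[ℝ] (ι → ℝ) →ₗ[ℝ] (ι → ℝ)}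
    (hb : ∀ x y : ι → ℝ, 0 ≤ x → 0 ≤ y → 0 ≤ b x y) {z z' w w' : ι → ℝ}
    (hz : 0 ≤ z) (hzz' : z ≤ z') (hw' : 0 ≤ w') (hww' : w ≤ w') : b z w ≤ b z' w' := by
  have h₁ := hb _ _ (sub_nonneg.2 hzz') hw'
  have h₂ := hb _ _ hz (sub_nonneg.2 hww')
  rw [map_sub, LinearMap.sub_apply] at h₁
  rw [map_sub] at h₂
  exact (sub_nonneg.1 h₂).trans (sub_nonneg.1 h₁)

section QVE

variable {ι : Type*} [Fintype ι] [DecidableEq ι]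

/-- The Jacobian `F'_x` of `x ↦ M x - a - b(x, x)`. -/
def qveDeriv (M : Matrix ι ι ℝ) (b : (ι → ℝ) →ₗ[ℝ] (ι → ℝ) →ₗ[ℝ] (ι → ℝ)) (x : ι → ℝ) :
    Matrix ι ι ℝ :=
  M - LinearMap.toMatrix' (b x) - LinearMap.toMatrix' (b.flip x)

variable {b : (ι → ℝ) →ₗ[ℝ] (ι → ℝ) →ₗ[ℝ] (ι → ℝ)}

theorem qveDeriv_mulVec (M : Matrix ι ι ℝ) (x w : ι → ℝ) :
    qveDeriv M b x *ᵥ w = M *ᵥ w - b x w - b w x := by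
  simp [qveDeriv, Matrix.sub_mulVec, LinearMap.toMatrix'_mulVec]

theorem smul_one_sub_qveDeriv_mulVec (t : ℝ) (P : Matrix ι ι ℝ) (x w : ι → ℝ) :
    (t • 1 - qveDeriv (t • 1 - P) b x) *ᵥ w = P *ᵥ w + b x w + b w x := by
  rw [Matrix.sub_mulVec, qveDeriv_mulVec, Matrix.sub_mulVec]
  abel

theorem smul_one_sub_qveDeriv_nonneg (hb : ∀ x y : ι → ℝ, 0 ≤ x → 0 ≤ y → 0 ≤ b x y)
    (t : ℝ) {P : Matrix ι ι ℝ} (hP : ∀ i j, 0 ≤ P i j) {x : ι → ℝ} (hx : 0 ≤ x) :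
    ∀ i j, 0 ≤ (t • 1 - qveDeriv (t • 1 - P) b x) i j :=
  Matrix.nonneg_of_mulVec_nonneg fun w hw => by
    rw [smul_one_sub_qveDeriv_mulVec]
    exact add_nonneg (add_nonneg (Matrix.mulVec_nonneg_s10 hP hw) (hb x w hx hw)) (hb w x hw hx)

theorem qveDeriv_sub_qveDeriv_nonneg (hb : ∀ x y : ι → ℝ, 0 ≤ x → 0 ≤ y → 0 ≤ b x y)
    (M : Matrix ι ι ℝ) {x x' : ι → ℝ} (hxx' : x ≤ x') :
    ∀ i j, 0 ≤ (qveDeriv M b x - qveDeriv M b x') i j :=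
  Matrix.nonneg_of_mulVec_nonneg fun w hw => by
    have hd := sub_nonneg.2 hxx'
    rw [Matrix.sub_mulVec, qveDeriv_mulVec, qveDeriv_mulVec,
      show M *ᵥ w - b x w - b w x - (M *ᵥ w - b x' w - b w x') =
        b (x' - x) w + b w (x' - x) by simp only [map_sub, LinearMap.sub_apply]; abel]
    exact add_nonneg (hb _ _ hd hw) (hb _ _ hw hd)

theorem qveDeriv_mulVec_le_of_le (hb : ∀ x y : ι → ℝ, 0 ≤ x → 0 ≤ y → 0 ≤ b x y)
    (M : Matrix ι ι ℝ) {x x' u : ι → ℝ} (hxx' : x ≤ x') (hu : 0 ≤ u) :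
    qveDeriv M b x' *ᵥ u ≤ qveDeriv M b x *ᵥ u := by
  rw [← sub_nonneg, ← Matrix.sub_mulVec]
  exact Matrix.mulVec_nonneg_s10 (qveDeriv_sub_qveDeriv_nonneg hb M hxx') hu

/-- Knaster–Tarski for `z ↦ t⁻¹ • (P z + a + b(z, z))` on `[0, y]`. -/
theorem exists_solution_le_of_supersolution {t : ℝ} (ht : 0 < t) {P : Matrix ι ι ℝ}
    (hP : ∀ i j, 0 ≤ P i j) {a : ι → ℝ} (ha : 0 ≤ a)
    (hb : ∀ x y : ι → ℝ, 0 ≤ x → 0 ≤ y → 0 ≤ b x y) {y : ι → ℝ} (hy : 0 ≤ y)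
    (hsup : a + b y y ≤ (t • 1 - P) *ᵥ y) :
    ∃ s, 0 ≤ s ∧ s ≤ y ∧ (t • 1 - P) *ᵥ s = a + b s s := by
  have : Fact (0 ≤ y) := ⟨hy⟩
  let G (z : ι → ℝ) : ι → ℝ := t⁻¹ • (P *ᵥ z + a + b z z)
  have hG_mono {z z'} (hz : 0 ≤ z) (hzz' : z ≤ z') : G z ≤ G z' := by
    refine smul_le_smul_of_nonneg_left (add_le_add (add_le_add_left ?_ _)
      (bilin_le_bilin hb hz hzz' (hz.trans hzz') hzz')) (inv_nonneg.2 ht.le)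
    rw [← sub_nonneg, ← Matrix.mulVec_sub]
    exact Matrix.mulVec_nonneg_s10 hP (sub_nonneg.2 hzz')
  have hG_nonneg {z} (hz : 0 ≤ z) : 0 ≤ G z := smul_nonneg (inv_nonneg.2 ht.le)
    (add_nonneg (add_nonneg (Matrix.mulVec_nonneg_s10 hP hz) ha) (hb z z hz hz))
  have hGy : G y ≤ y := by
    rw [Matrix.sub_mulVec, Matrix.smul_mulVec, Matrix.one_mulVec, le_sub_iff_add_le] at hsup
    calc G y ≤ t⁻¹ • (t • y) := smul_le_smul_of_nonneg_left
          (by rwa [add_comm, ← add_assoc] at hsup) (inv_nonneg.2 ht.le)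
      _ = y := inv_smul_smul₀ ht.ne' y
  let G' : Set.Icc 0 y →o Set.Icc 0 y :=
    ⟨fun z => ⟨G z, hG_nonneg z.2.1, (hG_mono z.2.1 z.2.2).trans hGy⟩,
      fun z _ h => hG_mono z.2.1 h⟩
  refine ⟨G'.lfp, G'.lfp.2.1, G'.lfp.2.2, ?_⟩
  have hfix : G G'.lfp = G'.lfp := congrArg Subtype.val G'.map_lfp
  have hsol : P *ᵥ G'.lfp + a + b G'.lfp G'.lfp = t • (G'.lfp : ι → ℝ) := by
    simpa [G, smul_inv_smul₀ ht.ne'] using congrArg (t • ·) hfix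
  rw [Matrix.sub_mulVec, Matrix.smul_mulVec, Matrix.one_mulVec, ← hsol]
  abel

/-- Otherwise `xs - ε • w` would be a nonnegative supersolution strictly below `xs` somewhere. -/
theorem eq_zero_of_qveDeriv_mulVec_nonpos (hb : ∀ x y : ι → ℝ, 0 ≤ x → 0 ≤ y → 0 ≤ b x y)
    {M : Matrix ι ι ℝ} {a xs : ι → ℝ} (hxs_sol : M *ᵥ xs = a + b xs xs)
    (hxs_pos : ∀ i, 0 < xs i) (hxs_le : ∀ y, 0 ≤ y → a + b y y ≤ M *ᵥ y → xs ≤ y)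
    {w : ι → ℝ} (hw : 0 ≤ w) (hFw : qveDeriv M b xs *ᵥ w ≤ 0)
    (hstrict : ∀ i, (qveDeriv M b xs *ᵥ w) i = 0 → b xs w i = 0) : w = 0 := by
  set d := -(qveDeriv M b xs *ᵥ w)
  have hd : 0 ≤ d := neg_nonneg.2 hFw
  have hxs : 0 ≤ xs := fun i => (hxs_pos i).le
  obtain ⟨c, hc, hwc⟩ := exists_nonneg_le_smul_of_apply_eq_zero hxs fun i hi =>
    absurd hi (hxs_pos i).ne'
  obtain ⟨C, hC, hcC⟩ := exists_nonneg_le_smul_of_apply_eq_zero (v := c • b xs w) hd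
    fun i hi => by simp [hstrict i (neg_eq_zero.1 hi)]
  have hbw : b w w ≤ C • d := calc
    b w w ≤ b (c • xs) w := bilin_le_bilin hb hw hwc hw le_rfl
    _ = c • b xs w := by rw [map_smul, LinearMap.smul_apply]
    _ ≤ C • d := hcC
  set ε := (1 + c + C)⁻¹
  have hε : 0 < ε := by positivity
  have hεc : ε * c ≤ 1 := by
    rw [inv_mul_le_iff₀ (by positivity)]; linarith
  have hεC : ε * C ≤ 1 := by
    rw [inv_mul_le_iff₀ (by positivity)]; linarith
  have hεw : ε • w ≤ xs := calc
    ε • w ≤ ε • c • xs := smul_le_smul_of_nonneg_left hwc hε.le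
    _ = (ε * c) • xs := smul_smul _ _ _
    _ ≤ xs := by simpa using smul_le_smul_of_nonneg_right hεc hxs
  have hsup : a + b (xs - ε • w) (xs - ε • w) ≤ M *ᵥ (xs - ε • w) := by
    have hdefect : M *ᵥ (xs - ε • w) - (a + b (xs - ε • w) (xs - ε • w)) =
        ε • (d - ε • b w w) := by
      simp only [d, qveDeriv_mulVec, Matrix.mulVec_sub, Matrix.mulVec_smul, hxs_sol, map_sub,
        map_smul, LinearMap.sub_apply, LinearMap.smul_apply]
      module
    rw [← sub_nonneg, hdefect]
    refine smul_nonneg hε.le (sub_nonneg.2 ?_)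
    calc ε • b w w ≤ ε • C • d := smul_le_smul_of_nonneg_left hbw hε.le
      _ = (ε * C) • d := smul_smul _ _ _
      _ ≤ d := by simpa using smul_le_smul_of_nonneg_right hεC hd
  have hεw0 : ε • w ≤ 0 := by
    simpa using hxs_le _ (sub_nonneg.2 hεw) hsup
  exact le_antisymm (fun i => nonpos_of_mul_nonpos_right (hεw0 i) hε) hw

theorem bilin_apply_eq_zero_of_supportInvariant
    (hb : ∀ x y : ι → ℝ, 0 ≤ x → 0 ≤ y → 0 ≤ b x y) {t : ℝ} {P : Matrix ι ι ℝ}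
    (hP : ∀ i j, 0 ≤ P i j) {x w : ι → ℝ} (hx : 0 ≤ x) (hw : 0 ≤ w)
    (h : (qveDeriv (t • 1 - P) b x).SupportInvariant w) {i : ι} (hi : w i = 0) :
    b x w i = 0 := by
  have hsum := (Matrix.supportInvariant_smul_one_sub t).2 h i hi
  rw [smul_one_sub_qveDeriv_mulVec] at hsum
  have h₁ := Matrix.mulVec_nonneg_s10 hP hw i
  have h₂ := hb x w hx hw i
  have h₃ := hb w x hw hx i
  simp only [Pi.add_apply, Pi.zero_apply] at hsum h₁ h₂ h₃
  linarith

theorem eq_zero_of_qveDeriv_mulVec_nonpos_of_isUnit_det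
    (hb : ∀ x y : ι → ℝ, 0 ≤ x → 0 ≤ y → 0 ≤ b x y) {t : ℝ} {P : Matrix ι ι ℝ}
    (hP : ∀ i j, 0 ≤ P i j) {a xs : ι → ℝ} (hxs_sol : (t • 1 - P) *ᵥ xs = a + b xs xs)
    (hxs_pos : ∀ i, 0 < xs i) (hxs_le : ∀ y, 0 ≤ y → a + b y y ≤ (t • 1 - P) *ᵥ y → xs ≤ y)
    (hdet : IsUnit (qveDeriv (t • 1 - P) b xs).det) {u : ι → ℝ} (hu : 0 ≤ u)
    (hFu : qveDeriv (t • 1 - P) b xs *ᵥ u ≤ 0) : u = 0 := by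
  set F := qveDeriv (t • 1 - P) b xs
  have hxs : 0 ≤ xs := fun i => (hxs_pos i).le
  have hF := smul_one_sub_qveDeriv_nonneg hb t hP hxs
  obtain ⟨U, huU, hFU, hU, hFU_inv⟩ :=
    Matrix.exists_supportInvariant_le_of_mulVec_nonpos hF hu hFu
  have hU0 : 0 ≤ U := hu.trans huU
  have hFU0 : F *ᵥ U ≤ 0 := hFU.trans hFu
  suffices U = 0 from le_antisymm (this ▸ huU) hu
  refine eq_zero_of_qveDeriv_mulVec_nonpos hb hxs_sol hxs_pos hxs_le hU0 hFU0 fun i hi => ?_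
  by_cases hUi : U i = 0
  · exact bilin_apply_eq_zero_of_supportInvariant hb hP hxs hU0 hU hUi
  refine absurd (Matrix.det_eq_zero_of_mulVec (fun i j hi hj => ?_) ⟨i, hi, hUi⟩) hdet.ne_zero
  exact hFU_inv.neg.apply_eq_zero hF (neg_nonneg.2 hFU0) (by simpa using hi)
    (neg_pos.2 ((hFU0 j).lt_of_ne hj))

end QVE

theorem qveDeriv_mulVec_eq_zero_of_isIrred {n : ℕ}
    {b : (Fin n → ℝ) →ₗ[ℝ] (Fin n → ℝ) →ₗ[ℝ] (Fin n → ℝ)}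
    (hb : ∀ x y : Fin n → ℝ, 0 ≤ x → 0 ≤ y → 0 ≤ b x y) {t : ℝ}
    {P : Matrix (Fin n) (Fin n) ℝ} (hP : ∀ i j, 0 ≤ P i j) {a xs : Fin n → ℝ}
    (hxs_sol : (t • 1 - P) *ᵥ xs = a + b xs xs) (hxs_pos : ∀ i, 0 < xs i)
    (hxs_le : ∀ y, 0 ≤ y → a + b y y ≤ (t • 1 - P) *ᵥ y → xs ≤ y)
    (hirr : IsIrred (qveDeriv (t • 1 - P) b xs)) {u : Fin n → ℝ} (hu : 0 ≤ u) (hu0 : u ≠ 0)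
    (hFu : qveDeriv (t • 1 - P) b xs *ᵥ u ≤ 0) :
    qveDeriv (t • 1 - P) b xs *ᵥ u = 0 ∧ ∀ i, 0 < u i := by
  set F := qveDeriv (t • 1 - P) b xs
  have hF := smul_one_sub_qveDeriv_nonneg hb t hP fun i => (hxs_pos i).le
  obtain ⟨U, huU, hFU, -, hFU_inv⟩ :=
    Matrix.exists_supportInvariant_le_of_mulVec_nonpos hF hu hFu
  have hU0 : 0 ≤ U := hu.trans huU
  have hFU0 : F *ᵥ U ≤ 0 := hFU.trans hFu
  have hFU_eq : F *ᵥ U = 0 := by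
    by_contra hne
    have hpos := hFU_inv.neg.pos_of_isIrred hF hirr (neg_nonneg.2 hFU0) (neg_ne_zero.2 hne)
    have hU := eq_zero_of_qveDeriv_mulVec_nonpos hb hxs_sol hxs_pos hxs_le hU0 hFU0
      fun i hi => absurd hi (by simpa using (hpos i).ne')
    exact hu0 (le_antisymm (hU ▸ huU) hu)
  have hFu_eq : F *ᵥ u = 0 := le_antisymm hFu (hFU_eq ▸ hFU)
  exact ⟨hFu_eq, Matrix.SupportInvariant.pos_of_isIrred hF hirr hu hu0 fun i _ =>
    congrFun hFu_eq i⟩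

theorem qve_derivative_below_minimal_nonsingular_general {n : ℕ}
    (M : Matrix (Fin n) (Fin n) ℝ) (hM : IsNsMMat M)
    (a : Fin n → ℝ) (ha : 0 ≤ a)
    (b : (Fin n → ℝ) →ₗ[ℝ] (Fin n → ℝ) →ₗ[ℝ] (Fin n → ℝ))
    (hb : ∀ x y : Fin n → ℝ, 0 ≤ x → 0 ≤ y → 0 ≤ b x y)
    (xs : Fin n → ℝ) (hxs_sol : M *ᵥ xs = a + b xs xs)
    (hxs_min : ∀ s : Fin n → ℝ, 0 ≤ s → M *ᵥ s = a + b s s → xs ≤ s)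
    (hxs_pos : ∀ i, 0 < xs i)
    (Fder : (Fin n → ℝ) → Matrix (Fin n) (Fin n) ℝ)
    (hFder : ∀ x, Fder x =
      M - LinearMap.toMatrix' (b x) - LinearMap.toMatrix' (b.flip x)) :
    (IsUnit (Fder xs).det →
      ∀ x : Fin n → ℝ, 0 ≤ x → x ≤ xs → IsNsMMat (Fder x)) ∧
    (IsIrred (Fder xs) →
      ∀ x : Fin n → ℝ, 0 ≤ x → x ≤ xs → Fder x ≠ Fder xs → IsNsMMat (Fder x)) := by
  obtain ⟨⟨t₀, P₀, hP₀, -, rfl⟩, -⟩ := hM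
  obtain ⟨t, ht, P, hP, hM⟩ := exists_pos_smul_one_sub hP₀ t₀
  rw [hM] at hxs_sol hxs_min hFder
  obtain rfl : Fder = qveDeriv (t • 1 - P) b := funext hFder
  have hxs_le (y : Fin n → ℝ) (hy : 0 ≤ y) (hsup : a + b y y ≤ (t • 1 - P) *ᵥ y) : xs ≤ y := by
    obtain ⟨s, hs, hsy, hsol⟩ := exists_solution_le_of_supersolution ht hP ha hb hy hsup
    exact (hxs_min s hs hsol).trans hsy
  have hcrit (x : Fin n → ℝ) (hx : 0 ≤ x) (hxxs : x ≤ xs)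
      (h : ∀ u, 0 ≤ u → qveDeriv (t • 1 - P) b x *ᵥ u ≤ 0 →
        qveDeriv (t • 1 - P) b xs *ᵥ u ≤ 0 → u = 0) :
      IsNsMMat (qveDeriv (t • 1 - P) b x) :=
    isNsMMat_of_mulVec_nonpos ht.le (smul_one_sub_qveDeriv_nonneg hb t hP hx) fun u hu hFu =>
      h u hu hFu ((qveDeriv_mulVec_le_of_le hb _ hxxs hu).trans hFu)
  refine ⟨fun hdet x hx hxxs => hcrit x hx hxxs fun u hu _ hFu =>
      eq_zero_of_qveDeriv_mulVec_nonpos_of_isUnit_det hb hP hxs_sol hxs_pos hxs_le hdet hu hFu,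
    fun hirr x hx hxxs hne => hcrit x hx hxxs fun u hu hFxu hFu => by_contra fun hu0 => hne ?_⟩
  obtain ⟨hFu0, hupos⟩ :=
    qveDeriv_mulVec_eq_zero_of_isIrred hb hP hxs_sol hxs_pos hxs_le hirr hu hu0 hFu
  refine sub_eq_zero.1 (Matrix.eq_zero_of_mulVec_nonpos
    (qveDeriv_sub_qveDeriv_nonneg hb _ hxxs) hupos ?_)
  rwa [Matrix.sub_mulVec, hFu0, sub_zero]

/-- Suppose the QVE `M x = a + b(x,x)` has a minimal nonnegative solution `x* > 0`,
and write `F'_x = M - b(x,·) - b(·,x)`. If `F'_{x*}` is nonsingular then `F'_x` is a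
nonsingular M-matrix for all `0 ≤ x ≤ x*`; if `F'_{x*}` is irreducible then `F'_x` is
a nonsingular M-matrix for all `0 ≤ x ≤ x*` with `F'_x ≠ F'_{x*}`. -/
theorem qve_derivative_below_minimal_nonsingular {n : ℕ}
    (M : Matrix (Fin n) (Fin n) ℝ) (hM : IsNsMMat M)
    (a : Fin n → ℝ) (ha : 0 ≤ a)
    (b : (Fin n → ℝ) →ₗ[ℝ] (Fin n → ℝ) →ₗ[ℝ] (Fin n → ℝ))
    (hb : ∀ x y : Fin n → ℝ, 0 ≤ x → 0 ≤ y → 0 ≤ b x y)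
    (xs : Fin n → ℝ) (hxs_nonneg : 0 ≤ xs) (hxs_sol : M *ᵥ xs = a + b xs xs)
    (hxs_min : ∀ s : Fin n → ℝ, 0 ≤ s → M *ᵥ s = a + b s s → xs ≤ s)
    (hxs_pos : ∀ i, 0 < xs i)
    (Fder : (Fin n → ℝ) → Matrix (Fin n) (Fin n) ℝ)
    (hFder : ∀ x, Fder x =
      M - LinearMap.toMatrix' (b x) - LinearMap.toMatrix' (b.flip x)) :
    (IsUnit (Fder xs).det →
      ∀ x : Fin n → ℝ, 0 ≤ x → x ≤ xs → IsNsMMat (Fder x)) ∧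
    (IsIrred (Fder xs) →
      ∀ x : Fin n → ℝ, 0 ≤ x → x ≤ xs → Fder x ≠ Fder xs → IsNsMMat (Fder x)) :=
  qve_derivative_below_minimal_nonsingular_general M hM a ha b hb xs hxs_sol hxs_min hxs_pos Fder
    hFder
end
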